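/- arXiv:1901.07722 — 17 statements merged into one kernel-verified Lean document; each statement's English description precedes it below -/
import Mathlib

section
/- Let X be a real Hausdorff locally convex space and C ⊆ X any subset. Then for every (x, x*) ∈ X × X*, the Fitzpatrick function of the normal cone satisfies φ_{N_C}(x, x*) = ι_{C#}(x) + σ_C(x*), where C# is the portable hull of C, ι_{C#} is the indicator function of C#, and σ_C is the support function of C. -/
open Set Classical

section Defs

variable {X : Type*} [AddCommGroup X] [Module ℝ X] [TopologicalSpace X]

/-- Graph of the normal cone `N_C` of a set `C`: `x* ∈ N_C(x)` iff `x ∈ C` and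
`⟨y - x, x*⟩ ≤ 0` for all `y ∈ C`. -/
def normalConeGraph (C : Set X) : Set (X × (X →L[ℝ] ℝ)) :=
  {p | p.1 ∈ C ∧ ∀ y ∈ C, p.2 (y - p.1) ≤ 0}

/-- The Fitzpatrick function of a multivalued operator given by its graph `G`:
`φ_T(x, x*) = sup {⟨x - a, a*⟩ + ⟨a, x*⟩ : (a, a*) ∈ G}`, with `sup ∅ = ⊥ = -∞`. -/
noncomputable def fitzpatrick (G : Set (X × (X →L[ℝ] ℝ))) (x : X) (x' : X →L[ℝ] ℝ) : EReal :=
  sSup ((fun p => ((p.2 (x - p.1) + x' p.1 : ℝ) : EReal)) '' G)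

/-- Indicator function of a set, with values in `EReal`: `0` on `A`, `+∞` outside. -/
noncomputable def indicatorE (A : Set X) (x : X) : EReal := if x ∈ A then 0 else ⊤

/-- Support function `σ_C(x*) = sup {⟨x, x*⟩ : x ∈ C}`, with `sup ∅ = ⊥ = -∞`. -/
noncomputable def supportFn (C : Set X) (x' : X →L[ℝ] ℝ) : EReal :=
  sSup ((fun x => ((x' x : ℝ) : EReal)) '' C)

/-- The portable hull `C#` of `C`: all `x` with `⟨x - a, a*⟩ ≤ 0` for every
`(a, a*)` in the graph of `N_C`. -/
def portableHull (C : Set X) : Set X :=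
  {x | ∀ p ∈ normalConeGraph C, p.2 (x - p.1) ≤ 0}

/-- A graph `G ⊆ X × X*` is monotone. -/
def IsMonotoneGraph (G : Set (X × (X →L[ℝ] ℝ))) : Prop :=
  ∀ p ∈ G, ∀ q ∈ G, 0 ≤ (p.2 - q.2) (p.1 - q.1)

/-- A graph is maximal monotone: nonempty, monotone, and maximal under inclusion
among monotone graphs. -/
def IsMaximalMonotone (G : Set (X × (X →L[ℝ] ℝ))) : Prop :=
  G.Nonempty ∧ IsMonotoneGraph G ∧ ∀ G', IsMonotoneGraph G' → G ⊆ G' → G' = G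

end Defs

/-- Addition on `EReal` with the convention `∞ + (-∞) = ∞` (`⊤` dominates). -/
noncomputable def eadd (a b : EReal) : EReal := if a = ⊤ ∨ b = ⊤ then ⊤ else a + b

variable {X : Type*} [AddCommGroup X] [Module ℝ X] [TopologicalSpace X]
  [IsTopologicalAddGroup X] [ContinuousSMul ℝ X] [LocallyConvexSpace ℝ X] [T2Space X]

/-- The Fitzpatrick function of the normal cone: `φ_{N_C}(x, x*) = ι_{C#}(x) + σ_C(x*)`
(with the convention `∞ + (-∞) = ∞`). -/
theorem fitzpatrick_normalCone_eq (C : Set X) (x : X) (x' : X →L[ℝ] ℝ) :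
    fitzpatrick (normalConeGraph C) x x' =
      eadd (indicatorE (portableHull C) x) (supportFn C x') := by
  by_cases hx : x ∈ portableHull C
  · have h0 : eadd (indicatorE (portableHull C) x) (supportFn C x') = supportFn C x' := by
      simp only [indicatorE, if_pos hx, eadd]
      split
      · rcases (by assumption : (0 : EReal) = ⊤ ∨ supportFn C x' = ⊤) with h | h
        · exact absurd h (by simp)
        · exact h.symm
      · simp
    rw [h0]
    apply le_antisymm
    · apply sSup_le
      rintro z ⟨⟨a, a'⟩, ⟨haC, hna⟩, rfl⟩
      dsimp only
      refine le_trans (b := ((x' a : ℝ) : EReal)) ?_ (le_sSup ⟨a, haC, rfl⟩)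
      have := hx (a, a') ⟨haC, hna⟩
      exact_mod_cast (by linarith : (a' (x - a) + x' a : ℝ) ≤ x' a)
    · apply sSup_le
      rintro z ⟨c, hc, rfl⟩
      apply le_sSup
      exact ⟨(c, 0), ⟨hc, fun y _ => le_of_eq (by simp)⟩, by simp⟩
  · have h0 : eadd (indicatorE (portableHull C) x) (supportFn C x') = ⊤ := by
      simp [indicatorE, if_neg hx, eadd]
    rw [h0]
    simp only [portableHull, Set.mem_setOf_eq, not_forall] at hx
    obtain ⟨p, hpG, hp⟩ := hx
    push_neg at hp
    refine sSup_eq_top.2 ?_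
    intro b hb
    obtain ⟨r, hrb⟩ : ∃ r : ℝ, b < (r : EReal) := by
      induction b using EReal.rec with
      | bot => exact ⟨0, bot_lt_iff_ne_bot.2 (by simp)⟩
      | coe r => exact ⟨r + 1, by exact_mod_cast lt_add_one r⟩
      | top => exact absurd hb (lt_irrefl _)
    set c := p.2 (x - p.1) with hc
    set t := max 0 ((r - x' p.1 + 1) / c) with ht
    have ht0 : 0 ≤ t := le_max_left _ _
    have htc : r - x' p.1 + 1 ≤ t * c := by
      have : (r - x' p.1 + 1) / c * c = r - x' p.1 + 1 := div_mul_cancel₀ _ (ne_of_gt hp)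
      nlinarith [mul_le_mul_of_nonneg_right (le_max_right 0 ((r - x' p.1 + 1) / c)) (le_of_lt hp)]
    refine ⟨_, ⟨(p.1, t • p.2), ⟨hpG.1, fun y hy => ?_⟩, rfl⟩, ?_⟩
    · have := hpG.2 y hy
      simp only [ContinuousLinearMap.smul_apply, smul_eq_mul]
      exact mul_nonpos_of_nonneg_of_nonpos ht0 this
    · refine lt_of_lt_of_le hrb ?_
      dsimp only
      simp only [ContinuousLinearMap.smul_apply, smul_eq_mul]
      exact_mod_cast (by linarith : (r : ℝ) ≤ t * p.2 (x - p.1) + x' p.1)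
end

section
/- Let X be a real Hausdorff locally convex space and C ⊆ X nonempty. Then: for every x ∈ X, φ_{N_C}(x, 0) = ι_{C#}(x) ≥ 0; for every (x, x*), φ_{N_C}(x, x*) ≤ ι_C(x) + σ_C(x*); and the portable hull satisfies C# = Pr_X(dom φ_{N_C}) = {x ∈ X : φ_{N_C}(x, 0) ≤ 0} = D(N_C⁺), where N_C⁺ is the operator whose graph is {(x, x*) : φ_{N_C}(x, x*) ≤ ⟨x, x*⟩} (the set of points monotonically related to N_C). -/
open Set Classical

variable {X : Type*} [AddCommGroup X] [Module ℝ X] [TopologicalSpace X]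
  [IsTopologicalAddGroup X] [ContinuousSMul ℝ X] [LocallyConvexSpace ℝ X] [T2Space X]

lemma mem_graph_of_mem {C : Set X} {a : X} (ha : a ∈ C) :
    ((a, (0 : X →L[ℝ] ℝ)) : X × (X →L[ℝ] ℝ)) ∈ normalConeGraph C :=
  ⟨ha, fun y _ => by simp⟩

lemma smul_mem_graph {C : Set X} {p : X × (X →L[ℝ] ℝ)} (hp : p ∈ normalConeGraph C)
    {t : ℝ} (ht : 0 ≤ t) : ((p.1, t • p.2) : X × (X →L[ℝ] ℝ)) ∈ normalConeGraph C := by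
  refine ⟨hp.1, fun y hy => ?_⟩
  have h := hp.2 y hy
  simp only [ContinuousLinearMap.smul_apply, smul_eq_mul]
  exact mul_nonpos_iff.2 (Or.inl ⟨ht, h⟩)

lemma fitz_top {C : Set X} {x : X} (hx : x ∉ portableHull C) (x' : X →L[ℝ] ℝ) :
    fitzpatrick (normalConeGraph C) x x' = ⊤ := by
  simp only [portableHull, mem_setOf_eq, not_forall] at hx
  obtain ⟨p, hp, hpos⟩ := hx
  push_neg at hpos
  rw [fitzpatrick, sSup_eq_top]
  intro b hb
  obtain ⟨r, hbr, -⟩ := EReal.lt_iff_exists_real_btwn.1 hb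
  set c := p.2 (x - p.1) with hc
  set d := x' p.1 with hd
  set t : ℝ := max 0 ((r - d + 1) / c) with htdef
  have ht : 0 ≤ t := le_max_left _ _
  have htc : r - d + 1 ≤ t * c := by
    have : (r - d + 1) / c ≤ t := le_max_right _ _
    calc r - d + 1 = ((r - d + 1) / c) * c := by field_simp
    _ ≤ t * c := mul_le_mul_of_nonneg_right this hpos.le
  refine ⟨_, ⟨(p.1, t • p.2), smul_mem_graph hp ht, rfl⟩, lt_trans hbr ?_⟩
  show (r : EReal) < (((t • p.2) (x - p.1) + x' p.1 : ℝ) : EReal)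
  have h2 : r < (t • p.2) (x - p.1) + x' p.1 := by
    simp only [ContinuousLinearMap.smul_apply, smul_eq_mul, ← hc, ← hd]
    linarith
  exact_mod_cast h2

lemma fitz_nonneg {C : Set X} (hC : C.Nonempty) (x : X) :
    0 ≤ fitzpatrick (normalConeGraph C) x 0 := by
  obtain ⟨a, ha⟩ := hC
  have hm : ((0:ℝ) : EReal) ∈ ((fun p => ((p.2 (x - p.1) + (0 : X →L[ℝ] ℝ) p.1 : ℝ) : EReal)) '' normalConeGraph C) :=
    ⟨(a, (0 : X →L[ℝ] ℝ)), mem_graph_of_mem ha, by simp⟩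
  have h := le_sSup hm
  unfold fitzpatrick
  simpa using h

lemma fitz_zero {C : Set X} (hC : C.Nonempty) {x : X} (hx : x ∈ portableHull C) :
    fitzpatrick (normalConeGraph C) x 0 = 0 := by
  apply le_antisymm
  · refine sSup_le ?_
    rintro b ⟨p, hp, rfl⟩
    have := hx p hp
    simp only [ContinuousLinearMap.zero_apply, add_zero]
    exact_mod_cast this
  · exact fitz_nonneg hC x


lemma eadd0 (b : EReal) : eadd 0 b = b := by
  rcases eq_or_ne b ⊤ with h | h <;> simp [eadd, h]


/-- For nonempty `C`: `φ_{N_C}(x, 0) = ι_{C#}(x) ≥ 0`,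
`φ_{N_C}(x, x*) ≤ ι_C(x) + σ_C(x*)`, and
`C# = Pr_X(dom φ_{N_C}) = {x : φ_{N_C}(x, 0) ≤ 0} = D(N_C⁺)`. -/
theorem fitzpatrick_normalCone_props (C : Set X) (hC : C.Nonempty) :
    (∀ x : X, fitzpatrick (normalConeGraph C) x 0 = indicatorE (portableHull C) x ∧
      0 ≤ fitzpatrick (normalConeGraph C) x 0) ∧
    (∀ (x : X) (x' : X →L[ℝ] ℝ),
      fitzpatrick (normalConeGraph C) x x' ≤ eadd (indicatorE C x) (supportFn C x')) ∧
    portableHull C =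
      Prod.fst '' {p : X × (X →L[ℝ] ℝ) | fitzpatrick (normalConeGraph C) p.1 p.2 < ⊤} ∧
    portableHull C = {x : X | fitzpatrick (normalConeGraph C) x 0 ≤ 0} ∧
    portableHull C = {x : X | ∃ x' : X →L[ℝ] ℝ,
      fitzpatrick (normalConeGraph C) x x' ≤ ((x' x : ℝ) : EReal)} := by
  refine ⟨?_, ?_, ?_, ?_, ?_⟩
  · intro x
    refine ⟨?_, fitz_nonneg hC x⟩
    by_cases hx : x ∈ portableHull C
    · rw [fitz_zero hC hx, indicatorE, if_pos hx]
    · rw [fitz_top hx 0, indicatorE, if_neg hx]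
  · intro x x'
    by_cases hx : x ∈ C
    · have he : eadd (indicatorE C x) (supportFn C x') = supportFn C x' := by
        rw [indicatorE, if_pos hx, eadd0]
      rw [he]
      refine sSup_le ?_
      rintro b ⟨p, hp, rfl⟩
      have h1 : p.2 (x - p.1) ≤ 0 := hp.2 x hx
      have h2 : ((x' p.1 : ℝ) : EReal) ≤ supportFn C x' := le_sSup ⟨p.1, hp.1, rfl⟩
      refine le_trans ?_ h2
      show ((p.2 (x - p.1) + x' p.1 : ℝ) : EReal) ≤ ((x' p.1 : ℝ) : EReal)
      exact_mod_cast by linarith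
    · simp only [indicatorE, if_neg hx, eadd, true_or, if_true]
      exact le_top
  · ext x
    constructor
    · intro hx
      exact ⟨(x, 0), by simp [mem_setOf_eq, fitz_zero hC hx], rfl⟩
    · rintro ⟨p, hp, rfl⟩
      by_contra hx
      rw [mem_setOf_eq, fitz_top hx] at hp
      exact lt_irrefl _ hp
  · ext x
    constructor
    · intro hx
      rw [mem_setOf_eq, fitz_zero hC hx]
    · intro hx
      by_contra h
      rw [mem_setOf_eq, fitz_top h] at hx
      exact absurd hx (by simp)
  · ext x
    constructor
    · intro hx
      exact ⟨0, by rw [fitz_zero hC hx]; simp⟩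
    · rintro ⟨x', hx'⟩
      by_contra h
      rw [fitz_top h] at hx'
      exact absurd hx' (by simp)
end

section
/- Let X be a real Hausdorff locally convex space and C ⊆ X. The normal cone N_C is a maximal monotone operator if and only if φ_{N_C}(x, x*) = ι_C(x) + σ_C(x*) for every (x, x*) ∈ X × X*. -/
open Set Classical

section Aux

variable {X : Type*} [AddCommGroup X] [Module ℝ X] [TopologicalSpace X]

lemma zero_mem_normalConeGraph {C : Set X} {a : X} (ha : a ∈ C) :
    (a, (0 : X →L[ℝ] ℝ)) ∈ normalConeGraph C :=
  ⟨ha, fun y _ => by simp⟩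

lemma smul_mem_normalConeGraph {C : Set X} {a : X} {a' : X →L[ℝ] ℝ}
    (h : (a, a') ∈ normalConeGraph C) {t : ℝ} (ht : 0 ≤ t) :
    (a, t • a') ∈ normalConeGraph C := by
  refine ⟨h.1, fun y hy => ?_⟩
  have := h.2 y hy
  simpa using mul_nonpos_of_nonneg_of_nonpos ht this

lemma normalConeGraph_monotone (C : Set X) : IsMonotoneGraph (normalConeGraph C) := by
  rintro ⟨x, x'⟩ hp ⟨y, y'⟩ hq
  have h1 := hp.2 y hq.1
  have h2 := hq.2 x hp.1
  simp only [ContinuousLinearMap.sub_apply, map_sub] at *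
  linarith

lemma maximal_of_cond {C : Set X} (hne : C.Nonempty) (hsub : portableHull C ⊆ C) :
    IsMaximalMonotone (normalConeGraph C) := by
  obtain ⟨c, hc⟩ := hne
  refine ⟨⟨_, zero_mem_normalConeGraph hc⟩, normalConeGraph_monotone C, ?_⟩
  intro G' hG' hsubG
  apply Set.Subset.antisymm _ hsubG
  rintro ⟨x, x'⟩ hx
  have hxC : x ∈ C := by
    apply hsub
    rintro ⟨a, a'⟩ ha
    by_contra hlt
    push_neg at hlt
    set d := a' (x - a) with hd
    set t := max 0 ((x' (x - a) + 1) / d) with htdef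
    have ht0 : 0 ≤ t := le_max_left _ _
    have hmem := smul_mem_normalConeGraph ha ht0
    have hmono := hG' _ hx _ (hsubG hmem)
    simp only [ContinuousLinearMap.sub_apply, ContinuousLinearMap.smul_apply,
      smul_eq_mul] at hmono
    have htd : x' (x - a) + 1 ≤ t * d :=
      (div_le_iff₀ hlt).1 (le_max_right _ _)
    linarith
  refine ⟨hxC, fun y hy => ?_⟩
  have hmono := hG' _ hx _ (hsubG (zero_mem_normalConeGraph hy))
  simp only [ContinuousLinearMap.sub_apply, ContinuousLinearMap.zero_apply,
    map_sub, sub_zero] at hmono ⊢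
  linarith

lemma cond_of_maximal {C : Set X} (h : IsMaximalMonotone (normalConeGraph C)) :
    C.Nonempty ∧ portableHull C ⊆ C := by
  obtain ⟨⟨p, hp⟩, hmono, hmax⟩ := h
  refine ⟨⟨p.1, hp.1⟩, ?_⟩
  intro x hx
  have h' : IsMonotoneGraph (insert (x, (0 : X →L[ℝ] ℝ)) (normalConeGraph C)) := by
    rintro p hp' q hq'
    rcases hp' with rfl | hp' <;> rcases hq' with rfl | hq'
    · simp
    · have := hx q hq'
      simp only [ContinuousLinearMap.sub_apply, ContinuousLinearMap.zero_apply, map_sub] at *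
      linarith
    · have := hx p hp'
      simp only [ContinuousLinearMap.sub_apply, ContinuousLinearMap.zero_apply, map_sub] at *
      linarith
    · exact hmono p hp' q hq'
  have heq := hmax _ h' (Set.subset_insert _ _)
  have hxg : (x, (0 : X →L[ℝ] ℝ)) ∈ normalConeGraph C := heq ▸ Set.mem_insert _ _
  exact hxg.1

lemma formula_of_cond {C : Set X} (hsub : portableHull C ⊆ C)
    (x : X) (x' : X →L[ℝ] ℝ) :
    fitzpatrick (normalConeGraph C) x x' = eadd (indicatorE C x) (supportFn C x') := by
  by_cases hx : x ∈ C
  · rw [indicatorE, if_pos hx]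
    have h0 : eadd 0 (supportFn C x') = supportFn C x' := by
      unfold eadd
      split_ifs with h
      · rcases h with h | h
        · exact absurd h (by simp)
        · rw [h]
      · exact zero_add _
    rw [h0]
    apply le_antisymm
    · apply sSup_le
      rintro b ⟨⟨a, a'⟩, ha, rfl⟩
      calc ((a' (x - a) + x' a : ℝ) : EReal) ≤ ((x' a : ℝ) : EReal) := by
            exact_mod_cast by linarith [ha.2 x hx]
        _ ≤ supportFn C x' := le_sSup ⟨a, ha.1, rfl⟩
    · apply sSup_le
      rintro b ⟨a, ha, rfl⟩
      refine le_sSup ⟨(a, 0), zero_mem_normalConeGraph ha, ?_⟩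
      simp
  · rw [indicatorE, if_neg hx]
    have htop : eadd ⊤ (supportFn C x') = ⊤ := by unfold eadd; simp
    rw [htop]
    have hnp : x ∉ portableHull C := fun h => hx (hsub h)
    simp only [portableHull, Set.mem_setOf_eq] at hnp
    push_neg at hnp
    obtain ⟨⟨a, a'⟩, ha, hd⟩ := hnp
    rw [fitzpatrick, sSup_eq_top]
    intro b hb
    obtain ⟨M, hbM, -⟩ := EReal.lt_iff_exists_real_btwn.1 hb
    set d := a' (x - a) with hdd
    set t := max 0 ((M + 1 - x' a) / d) with htdef
    have ht0 : 0 ≤ t := le_max_left _ _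
    have htd : M + 1 - x' a ≤ t * d := (div_le_iff₀ hd).1 (le_max_right _ _)
    refine ⟨_, ⟨(a, t • a'), smul_mem_normalConeGraph ha ht0, rfl⟩, ?_⟩
    refine lt_of_lt_of_le hbM ?_
    have : M ≤ (t • a') (x - a) + x' a := by
      simp only [ContinuousLinearMap.smul_apply, smul_eq_mul]
      linarith
    dsimp only
    exact_mod_cast this

lemma cond_of_formula {C : Set X}
    (h : ∀ (x : X) (x' : X →L[ℝ] ℝ),
      fitzpatrick (normalConeGraph C) x x' = eadd (indicatorE C x) (supportFn C x')) :
    C.Nonempty ∧ portableHull C ⊆ C := by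
  have hne : C.Nonempty := by
    by_contra hemp
    rw [Set.not_nonempty_iff_eq_empty] at hemp
    subst hemp
    have h0 := h 0 0
    simp [fitzpatrick, normalConeGraph, indicatorE, eadd] at h0
  refine ⟨hne, fun x hx => ?_⟩
  by_contra hxC
  have hf := h x 0
  have hle : fitzpatrick (normalConeGraph C) x 0 ≤ 0 := by
    apply sSup_le
    rintro b ⟨⟨a, a'⟩, ha, rfl⟩
    simp only [ContinuousLinearMap.zero_apply, add_zero]
    exact_mod_cast hx (a, a') ha
  rw [hf, indicatorE, if_neg hxC] at hle
  unfold eadd at hle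
  simp at hle

end Aux

variable {X : Type*} [AddCommGroup X] [Module ℝ X] [TopologicalSpace X]
  [IsTopologicalAddGroup X] [ContinuousSMul ℝ X] [LocallyConvexSpace ℝ X] [T2Space X]

/-- `N_C` is maximal monotone iff `φ_{N_C}(x, x*) = ι_C(x) + σ_C(x*)` for all `(x, x*)`
(with the convention `∞ + (-∞) = ∞`). -/
theorem normalCone_maximalMonotone_iff_fitzpatrick (C : Set X) :
    IsMaximalMonotone (normalConeGraph C) ↔
      ∀ (x : X) (x' : X →L[ℝ] ℝ),
        fitzpatrick (normalConeGraph C) x x' = eadd (indicatorE C x) (supportFn C x') := by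
  constructor
  · intro h x x'
    exact formula_of_cond (cond_of_maximal h).2 x x'
  · intro h
    obtain ⟨hne, hsub⟩ := cond_of_formula h
    exact maximal_of_cond hne hsub
end

section
/- Let X be a real Hausdorff locally convex space and C ⊆ X. The normal cone N_C is a maximal monotone operator if and only if C# ⊆ C (in which case C# = C), where C# is the portable hull of C. -/
open Set Classical

variable {X : Type*} [AddCommGroup X] [Module ℝ X] [TopologicalSpace X]
  [IsTopologicalAddGroup X] [ContinuousSMul ℝ X] [LocallyConvexSpace ℝ X] [T2Space X]

/-- `N_C` is maximal monotone iff `C# ⊆ C`, in which case `C# = C`. -/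
theorem normalCone_maximalMonotone_iff_portableHull_subset (C : Set X) :
    (IsMaximalMonotone (normalConeGraph C) ↔ portableHull C ⊆ C) ∧
    (IsMaximalMonotone (normalConeGraph C) → portableHull C = C) := by
  -- C ⊆ C#
  have hCsub : C ⊆ portableHull C := by
    intro x hx p hp
    exact hp.2 x hx
  -- N_C is always monotone
  have hmono : IsMonotoneGraph (normalConeGraph C) := by
    rintro ⟨a, a'⟩ ha ⟨b, b'⟩ hb
    have h1 : a' (b - a) ≤ 0 := ha.2 b hb.1
    have h2 : b' (a - b) ≤ 0 := hb.2 a ha.1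
    have : a' (a - b) = - a' (b - a) := by
      rw [← map_neg]; congr 1; abel
    simp only [ContinuousLinearMap.sub_apply]
    linarith [this]
  have hiff : IsMaximalMonotone (normalConeGraph C) ↔ portableHull C ⊆ C := by
    constructor
    · rintro ⟨hne, hm, hmax⟩ x hx
      -- extend the graph with (x, 0)
      have hG' : IsMonotoneGraph (normalConeGraph C ∪ {(x, (0 : X →L[ℝ] ℝ))}) := by
        rintro ⟨a, a'⟩ ha ⟨b, b'⟩ hb
        rcases ha with ha | ha
        · rcases hb with hb | hb
          · exact hm _ ha _ hb
          · -- b = x, b' = 0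
            have hb' : b = x ∧ b' = 0 := by
              simpa [Prod.ext_iff] using hb
            obtain ⟨rfl, rfl⟩ := hb'
            have h1 := hx (a, a') ha
            simp only [ContinuousLinearMap.sub_apply, ContinuousLinearMap.zero_apply, sub_zero]
            have hneg : a' (a - b) = - a' (b - a) := by
              rw [← map_neg]; congr 1; abel
            simp only at h1
            linarith
        · have ha' : a = x ∧ a' = 0 := by
            simpa [Prod.ext_iff] using ha
          obtain ⟨rfl, rfl⟩ := ha'
          rcases hb with hb | hb
          · have h1 := hx (b, b') hb
            simp only [ContinuousLinearMap.sub_apply, ContinuousLinearMap.zero_apply, zero_sub,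
              ContinuousLinearMap.neg_apply]
            simp only at h1
            linarith
          · have hb' : b = a ∧ b' = 0 := by
              simpa [Prod.ext_iff] using hb
            obtain ⟨rfl, rfl⟩ := hb'
            simp
      have heq := hmax _ hG' (Set.subset_union_left)
      have : (x, (0 : X →L[ℝ] ℝ)) ∈ normalConeGraph C := by
        rw [← heq]; exact Set.mem_union_right _ rfl
      exact this.1
    · intro hsub
      -- C is nonempty
      obtain ⟨c, hc⟩ : C.Nonempty := by
        rcases C.eq_empty_or_nonempty with hC | hC
        · exfalso
          have h0 : (0 : X) ∈ portableHull C := by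
            intro p hp
            exact absurd hp.1 (by simp [hC])
          exact absurd (hsub h0) (by simp [hC])
        · exact hC
      refine ⟨⟨(c, 0), hc, by simp⟩, hmono, ?_⟩
      intro G' hG' hsub'
      apply Set.Subset.antisymm _ hsub'
      rintro ⟨x, x'⟩ hxG'
      have hxC : x ∈ C := by
        apply hsub
        rintro ⟨a, a'⟩ ha
        by_contra hpos
        push_neg at hpos
        set cst : ℝ := a' (x - a) with hcst
        have hcpos : 0 < cst := hpos
        set t : ℝ := (|x' (x - a)| + 1) / cst with ht
        have htpos : 0 < t := by positivity
        have hta : (a, t • a') ∈ normalConeGraph C := by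
          refine ⟨ha.1, fun y hy => ?_⟩
          have := ha.2 y hy
          simp only [ContinuousLinearMap.smul_apply, smul_eq_mul]
          exact mul_nonpos_of_nonneg_of_nonpos htpos.le this
        have hmon := hG' _ hxG' _ (hsub' hta)
        simp only [ContinuousLinearMap.sub_apply, ContinuousLinearMap.smul_apply,
          smul_eq_mul] at hmon
        -- hmon : 0 ≤ x' (x - a) - t * a' (x - a)
        have htc : t * cst = |x' (x - a)| + 1 := by
          rw [ht]; field_simp
        have : x' (x - a) < t * cst := by
          rw [htc]
          calc x' (x - a) ≤ |x' (x - a)| := le_abs_self _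
            _ < |x' (x - a)| + 1 := by linarith
        linarith
      refine ⟨hxC, fun y hy => ?_⟩
      have hy0 : (y, (0 : X →L[ℝ] ℝ)) ∈ normalConeGraph C := ⟨hy, by simp⟩
      have hmon := hG' _ hxG' _ (hsub' hy0)
      simp only [ContinuousLinearMap.sub_apply, ContinuousLinearMap.zero_apply,
        sub_zero] at hmon
      have hneg : x' (y - x) = - x' (x - y) := by
        rw [← map_neg]; congr 1; abel
      linarith
  exact ⟨hiff, fun h => Set.Subset.antisymm (hiff.mp h) hCsub⟩
end

section
/- Let X be a real Hausdorff locally convex space and C ⊆ X. If the normal cone N_C is a maximal monotone operator, then C is nonempty, closed, and convex. -/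
open Set Classical

variable {X : Type*} [AddCommGroup X] [Module ℝ X] [TopologicalSpace X]
  [IsTopologicalAddGroup X] [ContinuousSMul ℝ X] [LocallyConvexSpace ℝ X] [T2Space X]

/-- If `N_C` is maximal monotone then `C` is nonempty, closed and convex. -/
theorem nonempty_isClosed_convex_of_normalCone_maximalMonotone (C : Set X)
    (h : IsMaximalMonotone (normalConeGraph C)) :
    C.Nonempty ∧ IsClosed C ∧ Convex ℝ C := by
  obtain ⟨hne, hmono, hmax⟩ := h
  set D := closure (convexHull ℝ C) with hD
  have hCD : C ⊆ D := (subset_convexHull ℝ C).trans subset_closure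
  have hsub : normalConeGraph C ⊆ normalConeGraph D := by
    rintro ⟨x, f⟩ ⟨hxC, hf⟩
    refine ⟨hCD hxC, ?_⟩
    intro y hy
    have hclosed : IsClosed {y : X | f y ≤ f x} := isClosed_le f.continuous continuous_const
    have hconv : Convex ℝ {y : X | f y ≤ f x} :=
      convex_halfSpace_le ⟨f.map_add, f.map_smul⟩ (f x)
    have hsubD : D ⊆ {y : X | f y ≤ f x} := by
      apply closure_minimal (convexHull_min ?_ hconv) hclosed
      intro z hz
      have := hf z hz
      simp only [map_sub, Set.mem_setOf_eq] at this ⊢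
      linarith
    have := hsubD hy
    simp only [map_sub, Set.mem_setOf_eq] at this ⊢
    linarith
  have hmonoD : IsMonotoneGraph (normalConeGraph D) := by
    rintro ⟨x1, f1⟩ ⟨h1, hf1⟩ ⟨x2, f2⟩ ⟨h2, hf2⟩
    have a := hf1 x2 h2
    have b := hf2 x1 h1
    simp only [ContinuousLinearMap.sub_apply]
    simp only [map_sub] at a b ⊢
    linarith
  have heq := hmax _ hmonoD hsub
  have hDC : D ⊆ C := by
    intro x hx
    have hx0 : ((x, (0 : X →L[ℝ] ℝ))) ∈ normalConeGraph D := ⟨hx, fun y _ => by simp⟩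
    rw [heq] at hx0
    exact hx0.1
  have hC : C = D := hCD.antisymm hDC
  obtain ⟨⟨a, f⟩, haf⟩ := hne
  refine ⟨⟨a, haf.1⟩, ?_, ?_⟩
  · rw [hC]; exact isClosed_closure
  · rw [hC]; exact (convex_convexHull ℝ C).closure
end

section
/- Let X be a real Banach space and let C ⊆ X be a nonempty, closed, and convex set. Then the normal cone N_C is a maximal monotone operator. -/
open Set Classical

open Filter Topology

variable {X : Type*} [NormedAddCommGroup X] [NormedSpace ℝ X] [CompleteSpace X]

/-- Bishop–Phelps style iteration: in a Banach space, for a closed set `C` on which `f`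
is bounded above and `k > 0`, above any `c₀ ∈ C` (in the Bishop–Phelps preorder
`c ⪯ c'` iff `‖c' - c‖ ≤ k (f c' - f c)`) there is a maximal point `a ∈ C`. -/
lemma bishopPhelps_aux (C : Set X) (hcl : IsClosed C) (f : X →L[ℝ] ℝ)
    (hbdd : BddAbove (f '' C)) (k : ℝ) (hk : 0 < k) {c₀ : X} (hc₀ : c₀ ∈ C) :
    ∃ a ∈ C, ‖a - c₀‖ ≤ k * (f a - f c₀) ∧
      ∀ c ∈ C, ‖c - a‖ ≤ k * (f c - f a) → c = a := by
  set r : X → X → Prop := fun c c' => c' ∈ C ∧ ‖c' - c‖ ≤ k * (f c' - f c) with hr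
  have hrefl : ∀ c ∈ C, r c c := fun c hc => ⟨hc, by simp⟩
  have htrans : ∀ c c' c'', c' ∈ C → r c c' → r c' c'' → r c c'' := by
    rintro c c' c'' _ ⟨h1, h2⟩ ⟨h3, h4⟩
    refine ⟨h3, ?_⟩
    calc ‖c'' - c‖ ≤ ‖c'' - c'‖ + ‖c' - c‖ := by
          simpa using norm_add_le (c'' - c') (c' - c)
      _ ≤ k * (f c'' - f c') + k * (f c' - f c) := add_le_add h4 h2
      _ = k * (f c'' - f c) := by ring
  have hbdd' : ∀ c : X, BddAbove (f '' {y | r c y}) :=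
    fun c => hbdd.mono (image_mono (fun y hy => hy.1))
  have hstep : ∀ c, c ∈ C → ∀ n : ℕ, ∃ c', r c c' ∧
      sSup (f '' {y | r c y}) - (1/2 : ℝ)^n < f c' := by
    intro c hc n
    have hne' : (f '' {y | r c y}).Nonempty := ⟨f c, c, hrefl c hc, rfl⟩
    have hlt : sSup (f '' {y | r c y}) - (1/2 : ℝ)^n < sSup (f '' {y | r c y}) := by
      have : (0:ℝ) < (1/2 : ℝ)^n := by positivity
      linarith
    obtain ⟨v, hv, hv2⟩ := exists_lt_of_lt_csSup hne' hlt
    obtain ⟨y, hy, rfl⟩ := hv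
    exact ⟨y, hy, hv2⟩
  choose! g hg1 hg2 using hstep
  set u : ℕ → X := fun n => Nat.rec c₀ (fun m cm => g cm m) n with hu
  have hu0 : u 0 = c₀ := rfl
  have hus : ∀ n, u (n+1) = g (u n) n := fun n => rfl
  have huC : ∀ n, u n ∈ C := by
    intro n; induction n with
    | zero => exact hc₀
    | succ m ih => rw [hus m]; exact (hg1 _ ih m).1
  have hur : ∀ n, r (u n) (u (n+1)) := by
    intro n; rw [hus n]; exact hg1 _ (huC n) n
  have hmono : ∀ n, f (u n) ≤ f (u (n+1)) := by
    intro n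
    have h2 := (hur n).2
    nlinarith [norm_nonneg (u (n+1) - u n)]
  have hchain : ∀ n m, n ≤ m → r (u n) (u m) := by
    intro n m hnm
    induction m, hnm using Nat.le_induction with
    | base => exact hrefl _ (huC n)
    | succ m hnm ih => exact htrans _ _ _ (huC m) ih (hur m)
  have hmono' : Monotone (fun n => f (u n)) := monotone_nat_of_le_succ hmono
  obtain ⟨B, hB⟩ := hbdd
  have hub : ∀ n, f (u n) ≤ B := fun n => hB ⟨u n, huC n, rfl⟩
  have hbdd2 : BddAbove (Set.range fun n => f (u n)) := ⟨B, by rintro _ ⟨n, rfl⟩; exact hub n⟩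
  set L : ℝ := ⨆ n, f (u n) with hL
  have htendsto : Tendsto (fun n => f (u n)) atTop (𝓝 L) := tendsto_atTop_ciSup hmono' hbdd2
  have hle_L : ∀ n, f (u n) ≤ L := fun n => le_ciSup hbdd2 n
  have hcau : CauchySeq u := by
    apply cauchySeq_of_le_tendsto_0 (fun n => k * (L - f (u n)))
    · intro n m N hn hm
      rcases le_total n m with h | h
      · have h0 := (hchain n m h).2
        have h1 : f (u N) ≤ f (u n) := hmono' hn
        have h2 : f (u m) ≤ L := hle_L m
        calc dist (u n) (u m) = ‖u m - u n‖ := by rw [dist_eq_norm, norm_sub_rev]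
          _ ≤ k * (f (u m) - f (u n)) := h0
          _ ≤ k * (L - f (u N)) := by nlinarith
      · have h0 := (hchain m n h).2
        have h1 : f (u N) ≤ f (u m) := hmono' hm
        have h2 : f (u n) ≤ L := hle_L n
        calc dist (u n) (u m) = ‖u n - u m‖ := by rw [dist_eq_norm]
          _ ≤ k * (f (u n) - f (u m)) := h0
          _ ≤ k * (L - f (u N)) := by nlinarith
    · have h : Tendsto (fun n => L - f (u n)) atTop (𝓝 (L - L)) :=
        tendsto_const_nhds.sub htendsto
      rw [sub_self] at h
      simpa using h.const_mul k
  obtain ⟨a, ha⟩ := cauchySeq_tendsto_of_complete hcau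
  have haC : a ∈ C := hcl.mem_of_tendsto ha (Eventually.of_forall huC)
  have hra : ∀ n, r (u n) a := by
    intro n
    refine ⟨haC, ?_⟩
    have h1 : Tendsto (fun m => ‖u m - u n‖) atTop (𝓝 ‖a - u n‖) :=
      (ha.sub tendsto_const_nhds).norm
    have h2 : Tendsto (fun m => k * (f (u m) - f (u n))) atTop (𝓝 (k * (f a - f (u n)))) :=
      ((((f.continuous.tendsto a).comp ha).sub tendsto_const_nhds).const_mul k)
    refine le_of_tendsto_of_tendsto h1 h2 ?_
    filter_upwards [eventually_ge_atTop n] with m hm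
    exact (hchain n m hm).2
  have hfa_le : ∀ n, f (u n) ≤ f a := by
    intro n
    have h0 := (hra n).2
    nlinarith [norm_nonneg (a - u n)]
  refine ⟨a, haC, by simpa [hu0] using (hra 0).2, ?_⟩
  intro c hcC hcle
  have hrac : r a c := ⟨hcC, hcle⟩
  have hfc_le : ∀ n : ℕ, f c ≤ f a + (1/2:ℝ)^n := by
    intro n
    have hrnc : r (u n) c := htrans _ _ _ haC (hra n) hrac
    have h1 : f c ≤ sSup (f '' {y | r (u n) y}) := le_csSup (hbdd' _) ⟨c, hrnc, rfl⟩
    have h2 := hg2 _ (huC n) n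
    rw [← hus n] at h2
    have h3 : f (u (n+1)) ≤ f a := hfa_le (n+1)
    linarith
  have hfc : f c ≤ f a := by
    by_contra h
    push_neg at h
    obtain ⟨n, hn⟩ := exists_pow_lt_of_lt_one (by linarith : (0:ℝ) < f c - f a)
      (by norm_num : (1/2:ℝ) < 1)
    have := hfc_le n
    linarith
  have h1 : ‖c - a‖ ≤ 0 := le_trans hcle (by nlinarith)
  have h2 : c - a = 0 := by simpa using le_antisymm h1 (norm_nonneg _)
  exact sub_eq_zero.1 h2

/-- The portable hull of a nonempty closed convex set in a Banach space is the set itself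
(a Bishop–Phelps type result). -/
lemma portableHull_subset (C : Set X) (hne : C.Nonempty) (hcl : IsClosed C)
    (hconv : Convex ℝ C) : portableHull C ⊆ C := by
  intro x hx
  by_contra hxC
  obtain ⟨f, u₀, hfu, hux⟩ := geometric_hahn_banach_closed_point hconv hcl hxC
  have hbdd : BddAbove (f '' C) := ⟨u₀, by rintro _ ⟨c, hc, rfl⟩; exact (hfu c hc).le⟩
  set s : ℝ := sSup (f '' C) with hs
  have hneim : (f '' C).Nonempty := hne.image f
  have hsle : s ≤ u₀ := csSup_le hneim (by rintro _ ⟨c, hc, rfl⟩; exact (hfu c hc).le)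
  have hxs : s < f x := lt_of_le_of_lt hsle hux
  set ε : ℝ := (f x - s) / 2 with hε
  have hεpos : 0 < ε := by rw [hε]; linarith
  have hfc_le_s : ∀ c ∈ C, f c ≤ s := fun c hc => le_csSup hbdd ⟨c, hc, rfl⟩
  obtain ⟨v, hv, hv2⟩ := exists_lt_of_lt_csSup hneim (by linarith : s - ε < s)
  obtain ⟨c₀, hc₀, rfl⟩ := hv
  set k : ℝ := ‖x - c₀‖ / ε + 1 with hkdef
  have hk : 0 < k := by positivity
  have hkε : k * ε = ‖x - c₀‖ + ε := by
    rw [hkdef, add_mul, one_mul, div_mul_cancel₀ _ hεpos.ne']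
  obtain ⟨a, haC, hac₀, hmax⟩ := bishopPhelps_aux C hcl f hbdd k hk hc₀
  have hfa : f a ≤ s := hfc_le_s a haC
  have hac₀' : ‖a - c₀‖ ≤ k * ε := le_trans hac₀ (by nlinarith)
  have hxa_lt : ‖x - a‖ < 2 * (k * ε) := by
    calc ‖x - a‖ ≤ ‖x - c₀‖ + ‖c₀ - a‖ := by simpa using norm_add_le (x - c₀) (c₀ - a)
      _ = ‖x - c₀‖ + ‖a - c₀‖ := by rw [norm_sub_rev c₀ a]
      _ ≤ ‖x - c₀‖ + (‖x - c₀‖ + ε) := by linarith [hac₀'.trans_eq hkε]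
      _ < 2 * (k * ε) := by rw [hkε]; linarith
  have hfxa : 2 * ε ≤ f (x - a) := by
    rw [map_sub, hε]; linarith
  set U : Set X := {y | ‖y‖ < k * f y} with hU
  have hxaU : x - a ∈ U := by
    have h2 : 2 * (k * ε) ≤ k * f (x - a) := by nlinarith
    exact lt_of_lt_of_le hxa_lt h2
  have hUopen : IsOpen U := isOpen_lt continuous_norm (continuous_const.mul f.continuous)
  have hUconv : Convex ℝ U := by
    intro y1 hy1 y2 hy2 α β hα hβ hab
    simp only [hU, mem_setOf_eq] at hy1 hy2 ⊢
    have hnorm : ‖α • y1 + β • y2‖ ≤ α * ‖y1‖ + β * ‖y2‖ := by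
      calc ‖α • y1 + β • y2‖ ≤ ‖α • y1‖ + ‖β • y2‖ := norm_add_le _ _
        _ = α * ‖y1‖ + β * ‖y2‖ := by
            rw [norm_smul, norm_smul, Real.norm_eq_abs, Real.norm_eq_abs,
              abs_of_nonneg hα, abs_of_nonneg hβ]
    have hmap : f (α • y1 + β • y2) = α * f y1 + β * f y2 := by
      simp [map_add, map_smul]
    rcases eq_or_lt_of_le hα with h0 | hαpos
    · have hβ1 : β = 1 := by linarith
      have hα0 : α = 0 := h0.symm
      rw [hα0, hβ1] at *
      simpa [hmap, hα0, hβ1] using hy2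
    · have h1 : α * ‖y1‖ < α * (k * f y1) := (mul_lt_mul_iff_right₀ hαpos).2 hy1
      have h2 : β * ‖y2‖ ≤ β * (k * f y2) := mul_le_mul_of_nonneg_left hy2.le hβ
      rw [hmap]; nlinarith
  have hdisj : Disjoint ((fun y => a + y) '' U) C := by
    rw [Set.disjoint_left]
    rintro _ ⟨y, hyU, rfl⟩ hcC
    have hy' : ‖(a + y) - a‖ ≤ k * (f (a + y) - f a) := by
      have he1 : (a + y) - a = y := by abel
      have he2 : k * (f (a + y) - f a) = k * f y := by rw [map_add]; ring
      rw [he1, he2]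
      exact hyU.le
    have heq := hmax (a + y) hcC hy'
    have hy0 : y = 0 := by
      have : a + y = a + 0 := by simpa using heq
      exact add_left_cancel this
    rw [hy0] at hyU
    simp only [hU, mem_setOf_eq, norm_zero, map_zero, mul_zero] at hyU
    exact lt_irrefl 0 hyU
  obtain ⟨g, u, hgU, hgC⟩ := geometric_hahn_banach_open
    (hUconv.translate a) ((isOpenMap_add_left a) U hUopen) hconv hdisj
  have haU : ∀ y ∈ U, g (a + y) < u := fun y hy => hgU _ ⟨y, hy, rfl⟩
  have hgau : u ≤ g a := hgC a haC
  have hcone : ∀ t : ℝ, 0 < t → t • (x - a) ∈ U := by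
    intro t ht
    have hxa : ‖x - a‖ < k * f (x - a) := hxaU
    simp only [hU, mem_setOf_eq, norm_smul, map_smul, Real.norm_eq_abs,
      abs_of_pos ht, smul_eq_mul]
    nlinarith
  have hgale : g a ≤ u := by
    by_contra h
    push_neg at h
    set y₀ := x - a with hy₀
    have hgy₀ : ∀ t : ℝ, 0 < t → g a + t * g y₀ < u := by
      intro t ht
      have := haU _ (hcone t ht)
      simpa [map_add, map_smul, smul_eq_mul] using this
    rcases le_or_gt 0 (g y₀) with h1 | h1
    · have := hgy₀ 1 one_pos
      nlinarith
    · have ht : 0 < (g a - u) / (-(g y₀)) := div_pos (by linarith) (by linarith)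
      have h2 := hgy₀ _ ht
      have h0 : g y₀ ≠ 0 := h1.ne
      have h3 := div_mul_cancel₀ (g a - u) (neg_ne_zero.2 h0)
      rw [mul_neg] at h3
      linarith
  have hgaeq : g a = u := le_antisymm hgale hgau
  have hmem : (a, -g) ∈ normalConeGraph C := by
    refine ⟨haC, fun y hy => ?_⟩
    have h1 : u ≤ g y := hgC y hy
    simp only [ContinuousLinearMap.neg_apply, map_sub]
    linarith
  have hle := hx (a, -g) hmem
  simp only [ContinuousLinearMap.neg_apply] at hle
  have hgxa : 0 ≤ g (x - a) := by linarith
  have hlt : g (a + (x - a)) < u := haU _ hxaU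
  rw [map_add, hgaeq] at hlt
  linarith

/-- In a Banach space, the normal cone of a nonempty closed convex set is maximal monotone. -/
theorem normalCone_maximalMonotone_of_banach (C : Set X)
    (hne : C.Nonempty) (hcl : IsClosed C) (hconv : Convex ℝ C) :
    IsMaximalMonotone (normalConeGraph C) := by
  refine ⟨⟨(hne.choose, 0), hne.choose_spec, fun y _ => by simp⟩, ?_, ?_⟩
  · rintro ⟨a, a'⟩ ⟨haC, ha'⟩ ⟨b, b'⟩ ⟨hbC, hb'⟩
    simp only [ContinuousLinearMap.sub_apply]
    have h1 := ha' b hbC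
    have h2 := hb' a haC
    have h3 : a' (a - b) = -(a' (b - a)) := by rw [← map_neg]; congr 1; abel
    have h4 : b' (a - b) ≤ 0 := h2
    rw [h3] at *
    linarith
  · intro G' hG' hsub
    apply Set.Subset.antisymm _ hsub
    rintro ⟨x, x'⟩ hxG'
    have hx0 : ∀ a ∈ C, 0 ≤ x' (x - a) := by
      intro a haC
      have hmem : (a, (0 : X →L[ℝ] ℝ)) ∈ normalConeGraph C := ⟨haC, fun z _ => by simp⟩
      have hmono := hG' (x, x') hxG' (a, 0) (hsub hmem)
      simpa using hmono
    have hxC : x ∈ C := by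
      apply portableHull_subset C hne hcl hconv
      rintro ⟨a, a'⟩ ⟨haC, ha'⟩
      by_contra h
      push_neg at h
      set t : ℝ := (x' (x - a) + 1) / (a' (x - a)) with ht
      have htpos : 0 ≤ t := div_nonneg (by linarith [hx0 a haC]) h.le
      have hmem : (a, t • a') ∈ normalConeGraph C := by
        refine ⟨haC, fun y hy => ?_⟩
        simp only [ContinuousLinearMap.smul_apply, smul_eq_mul]
        exact mul_nonpos_iff.2 (Or.inl ⟨htpos, ha' y hy⟩)
      have hmono := hG' (x, x') hxG' (a, t • a') (hsub hmem)
      simp only [ContinuousLinearMap.sub_apply, ContinuousLinearMap.smul_apply,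
        smul_eq_mul] at hmono
      have hcancel : t * a' (x - a) = x' (x - a) + 1 := div_mul_cancel₀ _ h.ne'
      linarith
    refine ⟨hxC, fun y hy => ?_⟩
    have h1 := hx0 y hy
    have h2 : x' (y - x) = -(x' (x - y)) := by rw [← map_neg]; congr 1; abel
    linarith
end

section
/- Let X be a real Hausdorff locally convex space and let C ⊆ X be a nonempty, closed, and convex set with nonempty topological interior. Then the normal cone N_C is a maximal monotone operator. -/
open Set Classical

variable {X : Type*} [AddCommGroup X] [Module ℝ X] [TopologicalSpace X]
  [IsTopologicalAddGroup X] [ContinuousSMul ℝ X] [LocallyConvexSpace ℝ X] [T2Space X]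

/-- In a Hausdorff LCS, the normal cone of a nonempty closed convex set with nonempty
interior is maximal monotone. -/
theorem normalCone_maximalMonotone_of_interior_nonempty (C : Set X)
    (hne : C.Nonempty) (hcl : IsClosed C) (hconv : Convex ℝ C)
    (hint : (interior C).Nonempty) :
    IsMaximalMonotone (normalConeGraph C) := by
  obtain ⟨c₀, hc₀⟩ := hne
  refine ⟨⟨(c₀, 0), hc₀, fun y _ => by simp⟩, ?_, ?_⟩
  · rintro ⟨p, p'⟩ ⟨hp, hp'⟩ ⟨q, q'⟩ ⟨hq, hq'⟩
    have h1 := hp' q hq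
    have h2 := hq' p hp
    have : q - p = -(p - q) := by abel
    simp only [ContinuousLinearMap.sub_apply]
    rw [this, map_neg] at h1
    linarith
  · intro G' hmono hsub
    ext ⟨x, x'⟩
    constructor
    swap
    · exact fun h => hsub h
    intro hxG'
    -- First: x ∈ C
    have hxC : x ∈ C := by
      by_contra hx
      obtain ⟨e, he⟩ := hint
      -- the segment map
      set g : ℝ → X := fun t => e + t • (x - e) with hg
      have hgcont : Continuous g := by
        continuity
      set T : Set ℝ := Set.Icc (0:ℝ) 1 ∩ g ⁻¹' C with hT
      have hTcomp : IsCompact T :=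
        (isCompact_Icc).inter_right (hcl.preimage hgcont)
      have hTne : T.Nonempty := ⟨0, ⟨le_refl _, zero_le_one⟩, by
        simp only [Set.mem_preimage, hg]; simpa using interior_subset he⟩
      set t₀ : ℝ := sSup T with ht₀
      have ht₀T : t₀ ∈ T := hTcomp.sSup_mem hTne
      obtain ⟨⟨ht₀0, ht₀1⟩, ht₀C⟩ := ht₀T
      set a : X := g t₀ with ha
      have haC : a ∈ C := ht₀C
      have ht₀lt1 : t₀ < 1 := by
        rcases lt_or_eq_of_le ht₀1 with h | h
        · exact h
        · exfalso; apply hx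
          have : g 1 = x := by simp [hg]
          rw [← this, ← h]; exact ht₀C
      -- t₀ > 0
      have ht₀pos : 0 < t₀ := by
        have hnb : g ⁻¹' (interior C) ∈ nhds (0:ℝ) := by
          apply hgcont.continuousAt.preimage_mem_nhds
          have : g 0 = e := by simp [hg]
          rw [this]
          exact isOpen_interior.mem_nhds he
        obtain ⟨δ, hδpos, hδ⟩ := Metric.mem_nhds_iff.mp hnb
        set t := min (δ/2) (1/2) with htdef
        have htpos : 0 < t := lt_min (by linarith) (by norm_num)
        have htT : t ∈ T := by
          constructor
          · exact ⟨le_of_lt htpos, le_trans (min_le_right _ _) (by norm_num)⟩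
          · have hb : t ∈ Metric.ball (0:ℝ) δ := by
              simp only [Metric.mem_ball, Real.dist_eq, sub_zero]
              rw [abs_of_pos htpos]
              exact lt_of_le_of_lt (min_le_left _ _) (by linarith)
            exact Set.mem_preimage.mpr (interior_subset (hδ hb))
        calc (0:ℝ) < t := htpos
          _ ≤ t₀ := le_csSup hTcomp.bddAbove htT
      -- a ∉ interior C
      have hanotint : a ∉ interior C := by
        intro haint
        have hnb : g ⁻¹' (interior C) ∈ nhds t₀ := by
          apply hgcont.continuousAt.preimage_mem_nhds
          exact isOpen_interior.mem_nhds haint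
        obtain ⟨δ, hδpos, hδ⟩ := Metric.mem_nhds_iff.mp hnb
        set t := min (t₀ + δ/2) ((t₀ + 1)/2) with htdef
        have ht1 : t₀ < t := lt_min (by linarith) (by linarith)
        have htT : t ∈ T := by
          constructor
          · exact ⟨by linarith, le_trans (min_le_right _ _) (by linarith)⟩
          · have hb : t ∈ Metric.ball t₀ δ := by
              simp only [Metric.mem_ball, Real.dist_eq]
              rw [abs_of_pos (by linarith)]
              have : t ≤ t₀ + δ/2 := min_le_left _ _
              linarith
            exact Set.mem_preimage.mpr (interior_subset (hδ hb))
        have := le_csSup hTcomp.bddAbove htT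
        linarith
      -- separate
      obtain ⟨f, hf⟩ := geometric_hahn_banach_open_point
        (hconv.interior) isOpen_interior hanotint
      have hfC : ∀ y ∈ C, f y ≤ f a := by
        intro y hy
        have key : ∀ ε : ℝ, 0 < ε → ε ≤ 1 → ε * f e + (1 - ε) * f y ≤ f a := by
          intro ε hε0 hε1
          have hmem : ε • e + (1 - ε) • y ∈ interior C :=
            hconv.combo_interior_closure_mem_interior he (subset_closure hy)
              hε0 (by linarith) (by ring)
          have := hf _ hmem
          rw [map_add, map_smul, map_smul] at this
          exact le_of_lt this
        have h1 : Filter.Tendsto (fun n : ℕ => 1 / ((n:ℝ) + 1)) Filter.atTop (nhds 0) :=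
          tendsto_one_div_add_atTop_nhds_zero_nat
        have h2 : Filter.Tendsto (fun ε : ℝ => ε * f e + (1 - ε) * f y) (nhds 0)
            (nhds (f y)) := by
          have hc : Continuous (fun ε : ℝ => ε * f e + (1 - ε) * f y) := by continuity
          have := hc.tendsto 0
          simpa using this
        refine le_of_tendsto (h2.comp h1) (Filter.Eventually.of_forall fun n => ?_)
        have hpos : 0 < 1 / ((n:ℝ) + 1) := by positivity
        have hle : 1 / ((n:ℝ) + 1) ≤ 1 := by
          rw [div_le_one (by positivity)]
          simp
        exact key _ hpos hle
      have hfe : f e < f a := hf e he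
      have hfxa : 0 < f (x - a) := by
        have hax : a - e = t₀ • (x - e) := by simp [ha, hg]
        have hxa : x - a = (1 - t₀) • (x - e) := by
          simp only [ha, hg]
          rw [sub_smul, one_smul]
          abel
        have hfxe : 0 < f (x - e) := by
          have : f (a - e) = t₀ * f (x - e) := by rw [hax, map_smul]; rfl
          have h2 : 0 < f (a - e) := by rw [map_sub]; linarith
          nlinarith
        rw [hxa, map_smul]
        have : (0:ℝ) < 1 - t₀ := by linarith
        exact mul_pos this hfxe
      -- pairs (a, s • f) are in the graph
      have hpairs : ∀ s : ℝ, 0 ≤ s → ((a, s • f) : X × (X →L[ℝ] ℝ)) ∈ normalConeGraph C := by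
        intro s hs
        refine ⟨haC, fun y hy => ?_⟩
        have : (s • f) (y - a) = s * f (y - a) := rfl
        rw [this]
        have := hfC y hy
        have : f (y - a) ≤ 0 := by rw [map_sub]; linarith
        exact mul_nonpos_of_nonneg_of_nonpos hs this
      set s : ℝ := max 0 ((x' (x - a) + 1) / f (x - a)) with hs
      have hs0 : 0 ≤ s := le_max_left _ _
      have hmon := hmono (x, x') hxG' (a, s • f) (hsub (hpairs s hs0))
      simp only [ContinuousLinearMap.sub_apply] at hmon
      have hsf : (s • f) (x - a) = s * f (x - a) := rfl
      rw [hsf] at hmon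
      have hsge : (x' (x - a) + 1) / f (x - a) ≤ s := le_max_right _ _
      have : x' (x - a) + 1 ≤ s * f (x - a) := by
        rw [div_le_iff₀ hfxa] at hsge
        linarith
      linarith
    -- Second: x' ∈ N_C(x)
    refine ⟨hxC, fun y hy => ?_⟩
    have hy0 : ((y, 0) : X × (X →L[ℝ] ℝ)) ∈ normalConeGraph C :=
      ⟨hy, fun z _ => by simp⟩
    have hmon := hmono (x, x') hxG' (y, 0) (hsub hy0)
    simp only [ContinuousLinearMap.sub_apply, ContinuousLinearMap.zero_apply,
      sub_zero] at hmon
    have : x' (y - x) = -(x' (x - y)) := by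
      rw [← map_neg]; congr 1; abel
    rw [this]
    linarith
end

section
/- Let X be a real Hausdorff locally convex space and let C ⊆ X be a nonempty, convex set that is compact in the weak topology σ(X, X*). Then the normal cone N_C is a maximal monotone operator. -/
open Set Classical

variable {X : Type*} [AddCommGroup X] [Module ℝ X] [TopologicalSpace X]
  [IsTopologicalAddGroup X] [ContinuousSMul ℝ X] [LocallyConvexSpace ℝ X] [T2Space X]

omit [IsTopologicalAddGroup X] [ContinuousSMul ℝ X] [LocallyConvexSpace ℝ X] [T2Space X] in
lemma weak_eval_continuous' (f : X →L[ℝ] ℝ) :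
    Continuous fun x : WeakSpace ℝ X => f ((toWeakSpace ℝ X).symm x) :=
  WeakBilin.eval_continuous (topDualPairing ℝ X).flip f

lemma weak_t2' : T2Space (WeakSpace ℝ X) := by
  constructor
  intro u v huv
  have h : (toWeakSpace ℝ X).symm u ≠ (toWeakSpace ℝ X).symm v := by
    intro h; exact huv ((toWeakSpace ℝ X).symm.injective h)
  obtain ⟨f, hf⟩ := SeparatingDual.exists_separating_of_ne (R := ℝ) h
  exact separated_by_continuous (weak_eval_continuous' f) hf

/-- In a Hausdorff LCS, the normal cone of a nonempty convex weakly compact set is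
maximal monotone. -/
theorem normalCone_maximalMonotone_of_weaklyCompact (C : Set X)
    (hne : C.Nonempty) (hconv : Convex ℝ C)
    (hcomp : IsCompact ((toWeakSpace ℝ X) '' C)) :
    IsMaximalMonotone (normalConeGraph C) := by
  have hT2 : T2Space (WeakSpace ℝ X) := weak_t2'
  have hCclosed : IsClosed C := by
    have hK : IsClosed ((toWeakSpace ℝ X) '' C) := hcomp.isClosed
    have hC : C = (toWeakSpaceCLM ℝ X) ⁻¹' ((toWeakSpace ℝ X) '' C) := by
      ext a
      simp only [Set.mem_preimage, toWeakSpaceCLM_eq_toWeakSpace]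
      exact ((toWeakSpace ℝ X).injective.mem_set_image).symm
    rw [hC]
    exact hK.preimage (toWeakSpaceCLM ℝ X).continuous
  refine ⟨⟨(hne.some, 0), hne.some_mem, fun y hy => by simp⟩, ?_, ?_⟩
  · intro p hp q hq
    have h1 := hp.2 q.1 hq.1
    have h2 := hq.2 p.1 hp.1
    have heq : (p.2 - q.2) (p.1 - q.1) = -(p.2 (q.1 - p.1)) - q.2 (p.1 - q.1) := by
      simp only [ContinuousLinearMap.sub_apply, map_sub]; ring
    rw [heq]; linarith
  · intro G' hG' hsub
    apply Set.Subset.antisymm _ hsub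
    rintro ⟨x, x'⟩ hxG'
    have hmono : ∀ q ∈ normalConeGraph C, 0 ≤ (x' - q.2) (x - q.1) :=
      fun q hq => hG' (x, x') hxG' q (hsub hq)
    have hxC : x ∈ C := by
      by_contra hx
      obtain ⟨f, u, hfu, hux⟩ := geometric_hahn_banach_closed_point hconv hCclosed hx
      obtain ⟨w, hwK, hwmax⟩ :=
        hcomp.exists_isMaxOn (hne.image _) (weak_eval_continuous' f).continuousOn
      obtain ⟨a, haC, rfl⟩ := hwK
      have hmax : ∀ y ∈ C, f y ≤ f a := by
        intro y hy
        have := hwmax (Set.mem_image_of_mem _ hy)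
        simpa using this
      have hd : 0 < f x - f a := by
        have := hfu a haC
        linarith
      set c : ℝ := x' (x - a) with hc
      have hkey : ∀ t : ℝ, 0 ≤ t → 0 ≤ c - t * (f x - f a) := by
        intro t ht
        have hq : (a, t • f) ∈ normalConeGraph C := by
          refine ⟨haC, fun y hy => ?_⟩
          have : f (y - a) ≤ 0 := by
            rw [map_sub]; linarith [hmax y hy]
          simpa using mul_nonpos_of_nonneg_of_nonpos ht this
        have := hmono (a, t • f) hq
        simp only [ContinuousLinearMap.sub_apply, ContinuousLinearMap.smul_apply,
          smul_eq_mul, map_sub] at this ⊢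
        rw [hc, map_sub]
        linarith
      rcases le_or_gt 0 c with h0 | h0
      · have := hkey ((c + 1) / (f x - f a)) (by positivity)
        rw [div_mul_cancel₀ _ hd.ne'] at this
        linarith
      · have := hkey 0 le_rfl
        linarith
    refine ⟨hxC, fun y hy => ?_⟩
    have hq : (y, (0 : X →L[ℝ] ℝ)) ∈ normalConeGraph C := ⟨hy, fun z hz => by simp⟩
    have := hmono (y, 0) hq
    simp only [sub_zero, ContinuousLinearMap.sub_apply, ContinuousLinearMap.zero_apply,
      map_sub] at this
    rw [map_sub]
    linarith
end

section
/- Let X be a real Hausdorff locally convex space and C ⊆ X. Then: (a) the restriction of N_{C#} to C coincides with N_C, i.e., N_{C#}|_C = N_C; (b) Graph N_C ⊆ Graph N_{C#}; (c) N_{C#} is a maximal monotone operator (when C ≠ ∅); and (d) (C#)# = C#. -/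
open Set Classical

variable {X : Type*} [AddCommGroup X] [Module ℝ X] [TopologicalSpace X]
  [IsTopologicalAddGroup X] [ContinuousSMul ℝ X] [LocallyConvexSpace ℝ X] [T2Space X]

/-- Properties of the portable hull: `N_{C#}|_C = N_C`, `Graph N_C ⊆ Graph N_{C#}`,
`N_{C#}` is maximal monotone (when `C ≠ ∅`), and `C## = C#`. -/
theorem portableHull_normalCone_props (C : Set X) :
    normalConeGraph (portableHull C) ∩ (C ×ˢ (univ : Set (X →L[ℝ] ℝ))) =
      normalConeGraph C ∧
    normalConeGraph C ⊆ normalConeGraph (portableHull C) ∧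
    (C.Nonempty → IsMaximalMonotone (normalConeGraph (portableHull C))) ∧
    portableHull (portableHull C) = portableHull C := by
  have hCsub : C ⊆ portableHull C := fun x hx p hp => hp.2 x hx
  have hb : normalConeGraph C ⊆ normalConeGraph (portableHull C) := by
    rintro ⟨x, x'⟩ hx
    exact ⟨hCsub hx.1, fun y hy => hy (x, x') hx⟩
  refine ⟨?_, hb, ?_, ?_⟩
  · ext ⟨x, x'⟩
    simp only [mem_inter_iff, mem_prod, mem_univ, and_true]
    constructor
    · rintro ⟨⟨_, h⟩, hxC⟩
      exact ⟨hxC, fun y hy => h y (hCsub hy)⟩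
    · intro h
      exact ⟨hb h, h.1⟩
  · rintro ⟨x0, hx0⟩
    refine ⟨⟨(x0, 0), hCsub hx0, fun y _ => by simp⟩, ?_, ?_⟩
    · rintro ⟨p1, p2⟩ hp ⟨q1, q2⟩ hq
      have h1 := hp.2 q1 hq.1
      have h2 := hq.2 p1 hp.1
      have h3 : p2 (p1 - q1) = - p2 (q1 - p1) := by rw [← map_neg, neg_sub]
      simp only [ContinuousLinearMap.sub_apply]
      linarith
    · intro G' hG' hsub
      refine Subset.antisymm ?_ hsub
      rintro ⟨x, x'⟩ hx
      have hxH : x ∈ portableHull C := by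
        rintro ⟨a, a'⟩ ha
        by_contra hpos
        push_neg at hpos
        have ht : ∀ t : ℝ, 0 ≤ t → t * a' (x - a) ≤ x' (x - a) := by
          intro t ht0
          have hmem : ((a, t • a') : X × (X →L[ℝ] ℝ)) ∈ normalConeGraph C := by
            refine ⟨ha.1, fun y hy => ?_⟩
            have := ha.2 y hy
            simp only [ContinuousLinearMap.smul_apply, smul_eq_mul]
            exact mul_nonpos_of_nonneg_of_nonpos ht0 this
          have hmono := hG' (x, x') hx (a, t • a') (hsub (hb hmem))
          simp only [ContinuousLinearMap.sub_apply, ContinuousLinearMap.smul_apply,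
            smul_eq_mul] at hmono
          linarith
        have hK : 0 ≤ x' (x - a) := by simpa using ht 0 le_rfl
        have htc := ht ((x' (x - a) + 1) / a' (x - a))
          (div_nonneg (by linarith) hpos.le)
        rw [div_mul_cancel₀ _ (ne_of_gt hpos)] at htc
        linarith
      refine ⟨hxH, fun y hy => ?_⟩
      have hmono := hG' (x, x') hx (y, (0 : X →L[ℝ] ℝ))
        (hsub ⟨hy, fun z _ => by simp⟩)
      simp only [ContinuousLinearMap.sub_apply, ContinuousLinearMap.zero_apply,
        sub_zero] at hmono
      have : x' (y - x) = - x' (x - y) := by rw [← map_neg, neg_sub]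
      linarith
  · ext x
    constructor
    · intro hx p hp
      exact hx p (hb hp)
    · intro hx p hp
      exact hp.2 x hx
end

section
/- Let X be a real Hausdorff locally convex space and C ⊆ X. If T : X ⇉ X* is a monotone operator whose graph contains Graph N_C, then the domain of T is contained in the portable hull: D(T) ⊆ C#. -/
open Set Classical

variable {X : Type*} [AddCommGroup X] [Module ℝ X] [TopologicalSpace X]
  [IsTopologicalAddGroup X] [ContinuousSMul ℝ X] [LocallyConvexSpace ℝ X] [T2Space X]

/-- Every monotone extension of `N_C` has its domain contained in the portable hull `C#`. -/
theorem domain_subset_portableHull_of_monotone_extension (C : Set X)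
    (G : Set (X × (X →L[ℝ] ℝ))) (hmono : IsMonotoneGraph G)
    (hext : normalConeGraph C ⊆ G) :
    {x : X | ∃ x' : X →L[ℝ] ℝ, (x, x') ∈ G} ⊆ portableHull C := by
  rintro x ⟨x', hx⟩ p hp
  by_contra hpos
  push_neg at hpos
  set c := p.2 (x - p.1) with hc
  set s : ℝ := max 0 ((x' (x - p.1) + 1) / c) with hs
  have hs0 : 0 ≤ s := le_max_left _ _
  have hsp : (p.1, s • p.2) ∈ normalConeGraph C := by
    refine ⟨hp.1, fun y hy => ?_⟩
    have := hp.2 y hy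
    simpa using mul_nonpos_of_nonneg_of_nonpos hs0 this
  have hmon := hmono (x, x') hx (p.1, s • p.2) (hext hsp)
  simp only [ContinuousLinearMap.sub_apply, ContinuousLinearMap.smul_apply,
    smul_eq_mul] at hmon
  -- hmon : 0 ≤ x' (x - p.1) - s * p.2 (x - p.1)
  have hsc : x' (x - p.1) + 1 ≤ s * c := by
    rcases le_or_gt ((x' (x - p.1) + 1) / c) 0 with h | h
    · have : s = 0 := max_eq_left h
      rw [this, zero_mul]
      have := (div_le_iff₀ hpos).mp h
      linarith
    · have hse : s = (x' (x - p.1) + 1) / c := max_eq_right h.le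
      rw [hse, div_mul_cancel₀ _ (ne_of_gt hpos)]
  have := hmon.trans (by linarith : x' (x - p.1) - s * c ≤ -1)
  linarith
end

section
/- Let X be a real Hausdorff locally convex space. If for every closed convex set C ⊆ X the normal cone N_C is a maximal monotone operator, then for every closed convex set C ⊆ X the set Supp C of support points of C is dense in the topological boundary bd C of C. -/
open Set Classical

variable {X : Type*} [AddCommGroup X] [Module ℝ X] [TopologicalSpace X]
  [IsTopologicalAddGroup X] [ContinuousSMul ℝ X] [LocallyConvexSpace ℝ X] [T2Space X]

/-- The set of support points of `C`: points of `C` where some nonzero continuous linear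
functional attains its supremum over `C`. -/
def suppPoints (C : Set X) : Set X :=
  {x : X | ∃ x' : X →L[ℝ] ℝ, x' ≠ 0 ∧ (x, x') ∈ normalConeGraph C}

set_option maxHeartbeats 1000000 in
lemma normal_key {X : Type*} [AddCommGroup X] [Module ℝ X] [TopologicalSpace X]
    [IsTopologicalAddGroup X] [ContinuousSMul ℝ X]
    {C K : Set X} (hC : Convex ℝ C) (hK : Convex ℝ K)
    {x : X} (hxC : x ∈ C) (hxK : x ∈ interior K)
    (hnosupp : ∀ b ∈ K, ∀ x' : X →L[ℝ] ℝ, (b, x') ∈ normalConeGraph C → x' = 0)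
    {a : X} {a' : X →L[ℝ] ℝ} (ha : (a, a') ∈ normalConeGraph (C ∩ K))
    {w : X} (hw : w ∈ interior K) : a' (w - a) ≤ 0 := by
  obtain ⟨⟨haC, haK⟩, hamax⟩ := ha
  set S : Set (X × ℝ) :=
    {p : X × ℝ | a + p.1 ∈ interior K} ∩ {p : X × ℝ | 0 < a' p.1 + p.2} with hSdef
  set B : Set (X × ℝ) := {p : X × ℝ | a + p.1 ∈ C ∧ p.2 ≤ 0} with hBdef
  have hSopen : IsOpen S := by
    apply IsOpen.inter
    · exact isOpen_interior.preimage (continuous_const.add continuous_fst)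
    · exact isOpen_lt continuous_const
        (((a'.continuous.comp continuous_fst).add continuous_snd))
  have hSconv : Convex ℝ S := by
    apply Convex.inter
    · intro p hp q hq tp tq htp htq hsum
      simp only [mem_setOf_eq] at hp hq ⊢
      have key : a + (tp • p + tq • q).1 = tp • (a + p.1) + tq • (a + q.1) := by
        have h1 : tp • a + tq • a = a := by rw [← add_smul, hsum, one_smul]
        calc a + (tp • p + tq • q).1 = (tp • a + tq • a) + (tp • p.1 + tq • q.1) := by
              rw [h1]; simp only [Prod.fst_add, Prod.smul_fst]
          _ = tp • (a + p.1) + tq • (a + q.1) := by simp only [smul_add]; abel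
      rw [key]
      exact hK.interior hp hq htp htq hsum
    · intro p hp q hq tp tq htp htq hsum
      simp only [mem_setOf_eq] at hp hq ⊢
      simp only [Prod.fst_add, Prod.snd_add, Prod.smul_fst, Prod.smul_snd, map_add, map_smul,
        smul_eq_mul]
      rcases eq_or_lt_of_le htp with h0 | h0
      · have htq1 : tq = 1 := by linarith
        rw [← h0, htq1]; simpa using hq
      · nlinarith [mul_pos h0 hp, mul_nonneg htq hq.le]
  have hBconv : Convex ℝ B := by
    intro p hp q hq tp tq htp htq hsum
    obtain ⟨hp1, hp2⟩ := hp
    obtain ⟨hq1, hq2⟩ := hq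
    constructor
    · have key : a + (tp • p + tq • q).1 = tp • (a + p.1) + tq • (a + q.1) := by
        have h1 : tp • a + tq • a = a := by rw [← add_smul, hsum, one_smul]
        calc a + (tp • p + tq • q).1 = (tp • a + tq • a) + (tp • p.1 + tq • q.1) := by
              rw [h1]; simp only [Prod.fst_add, Prod.smul_fst]
          _ = tp • (a + p.1) + tq • (a + q.1) := by simp only [smul_add]; abel
      rw [key]
      exact hC hp1 hq1 htp htq hsum
    · simp only [Prod.snd_add, Prod.smul_snd, smul_eq_mul]
      nlinarith
  have hdisj : Disjoint S B := by
    rw [Set.disjoint_left]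
    rintro p ⟨hp1, hp2⟩ ⟨hq1, hq2⟩
    simp only [mem_setOf_eq] at hp1 hp2
    have hmem : a + p.1 ∈ C ∩ K := ⟨hq1, interior_subset hp1⟩
    have := hamax _ hmem
    simp only [add_sub_cancel_left] at this
    linarith
  obtain ⟨f, u, hfS, hfB⟩ := geometric_hahn_banach_open hSconv hSopen hBconv hdisj
  set g : X →L[ℝ] ℝ := f.comp (ContinuousLinearMap.inl ℝ X ℝ) with hgdef
  set s : ℝ := f (0, 1) with hsdef
  have hf : ∀ (y : X) (r : ℝ), f (y, r) = g y + r * s := by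
    intro y r
    have h1 : ((y, r) : X × ℝ) = ((y, 0) : X × ℝ) + r • (((0 : X), (1 : ℝ)) : X × ℝ) := by
      simp [Prod.ext_iff]
    rw [h1, map_add, map_smul]
    simp [hgdef, smul_eq_mul, hsdef]
  have hu0 : u ≤ 0 := by
    have h00 : ((0 : X), (0 : ℝ)) ∈ B := ⟨by simpa using haC, le_refl 0⟩
    have := hfB _ h00
    have h0 : f ((0 : X), (0 : ℝ)) = 0 := map_zero f
    linarith
  set M : ℝ := -(a' (x - a)) + 1 with hMdef
  have hp₀S : ((x - a, M) : X × ℝ) ∈ S := by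
    constructor
    · simp only [mem_setOf_eq, add_sub_cancel]
      exact hxK
    · simp only [mem_setOf_eq, hMdef]; linarith
  have hfp₀ : f (x - a, M) < u := hfS _ hp₀S
  have hfp₀neg : f (x - a, M) < 0 := lt_of_lt_of_le hfp₀ hu0
  have h0u : 0 ≤ u := by
    by_contra hcon
    push_neg at hcon
    set t : ℝ := u / (2 * f (x - a, M)) with htdef
    have htpos : 0 < t := div_pos_of_neg_of_neg hcon (by linarith)
    rcases le_or_gt t 1 with hle | hgt
    · have htS : (t • ((x - a, M) : X × ℝ)) ∈ S := by
        constructor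
        · simp only [mem_setOf_eq, Prod.smul_fst]
          have := hK.add_smul_sub_mem_interior haK hxK ⟨htpos, hle⟩
          simpa using this
        · simp only [mem_setOf_eq, Prod.smul_fst, Prod.smul_snd, map_smul, smul_eq_mul]
          have : 0 < a' (x - a) + M := by simp [hMdef]; linarith
          nlinarith
      have := hfS _ htS
      rw [map_smul, smul_eq_mul] at this
      have hFne : f (x - a, M) ≠ 0 := ne_of_lt hfp₀neg
      have hcalc : t * f (x - a, M) = u / 2 := by
        rw [htdef]
        field_simp
      rw [hcalc] at this
      linarith
    · -- t > 1 : u / (2 f) > 1 means u < 2 f (multiplying by neg), f < u gives contradiction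
      have h2f : 2 * f (x - a, M) < 0 := by linarith
      have : u < 2 * f (x - a, M) := by
        have := (one_lt_div_of_neg h2f).mp hgt
        linarith
      linarith
  have huz : u = 0 := le_antisymm hu0 h0u
  have hs_nonpos : s ≤ 0 := by
    by_contra hcon
    push_neg at hcon
    set c : ℝ := (1 - f (x - a, M)) / s with hcdef
    have hcpos : 0 < c := div_pos (by linarith) hcon
    have hqS : ((x - a, M + c) : X × ℝ) ∈ S := by
      refine ⟨by simp only [mem_setOf_eq, add_sub_cancel]; exact hxK, ?_⟩
      simp only [mem_setOf_eq, hMdef]; linarith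
    have := hfS _ hqS
    rw [hf] at this
    have hfp : f (x - a, M) = g (x - a) + M * s := hf _ _
    have hcs : c * s = 1 - f (x - a, M) := by
      rw [hcdef, div_mul_cancel₀ _ hcon.ne']
    nlinarith
  have hs_ne : s ≠ 0 := by
    intro hs0
    have hB1 : ((x - a, (0 : ℝ)) : X × ℝ) ∈ B := by
      constructor
      · simp only [mem_setOf_eq, add_sub_cancel]; exact hxC
      · exact le_refl 0
    have h1 := hfB _ hB1
    rw [hf, huz] at h1
    have h2 : f (x - a, M) = g (x - a) + M * s := hf _ _
    rw [hs0] at h1 h2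
    simp at h1 h2
    linarith
  have hsneg : s < 0 := lt_of_le_of_ne hs_nonpos hs_ne
  have hg0 : g = 0 := by
    have hgraph : (a, -g) ∈ normalConeGraph C := by
      refine ⟨haC, fun c hc => ?_⟩
      have hB1 : ((c - a, (0 : ℝ)) : X × ℝ) ∈ B := by
        constructor
        · simp only [mem_setOf_eq, add_sub_cancel]; exact hc
        · exact le_refl 0
      have h1 := hfB _ hB1
      rw [hf, huz] at h1
      simp only [ContinuousLinearMap.neg_apply]
      linarith
    have := hnosupp a haK (-g) hgraph
    simpa [neg_eq_zero] using this
  by_contra hcon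
  push_neg at hcon
  set r : ℝ := -(a' (w - a)) / 2 with hrdef
  have hrneg : r < 0 := by rw [hrdef]; linarith
  have hpS : ((w - a, r) : X × ℝ) ∈ S := by
    refine ⟨by simp only [mem_setOf_eq, add_sub_cancel]; exact hw, ?_⟩
    simp only [mem_setOf_eq, hrdef]; linarith
  have := hfS _ hpS
  rw [hf, hg0, huz] at this
  simp only [ContinuousLinearMap.zero_apply, zero_add] at this
  nlinarith

/-- If the normal cone of every nonempty closed convex subset of `X` is maximal monotone,
then for every closed convex `C ⊆ X` the support points of `C` are dense in its boundary. -/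
theorem suppPoints_dense_in_frontier
    (h : ∀ C : Set X, C.Nonempty → IsClosed C → Convex ℝ C →
      IsMaximalMonotone (normalConeGraph C)) :
    ∀ C : Set X, IsClosed C → Convex ℝ C → frontier C ⊆ closure (suppPoints C) := by
  
  intro C hCcl hCconv x hx
  by_contra hxcl
  have hxC : x ∈ C := hCcl.frontier_subset hx
  -- an open neighborhood of x disjoint from the support points
  rw [mem_closure_iff] at hxcl
  push_neg at hxcl
  obtain ⟨U, hUopen, hxU, hUdisj⟩ := hxcl
  -- a closed convex neighborhood K of x inside U
  obtain ⟨V, hV, hVcl, hVU⟩ := exists_mem_nhds_isClosed_subset (hUopen.mem_nhds hxU)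
  obtain ⟨W, ⟨hWnhds, hWconv⟩, hWV⟩ := (LocallyConvexSpace.convex_basis (𝕜 := ℝ) x).mem_iff.mp hV
  set K : Set X := closure W with hKdef
  have hKcl : IsClosed K := isClosed_closure
  have hKconv : Convex ℝ K := hWconv.closure
  have hKU : K ⊆ U := (closure_minimal hWV hVcl).trans hVU
  have hxK : x ∈ interior K :=
    mem_interior_iff_mem_nhds.mpr (Filter.mem_of_superset hWnhds subset_closure)
  -- a point z in interior K outside C
  have hxnotint : x ∉ interior C := hx.2
  obtain ⟨z, hzK, hzC⟩ : ∃ z ∈ interior K, z ∉ C := by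
    by_contra hcon
    push_neg at hcon
    exact hxnotint (interior_maximal hcon isOpen_interior hxK)
  -- the no-support hypothesis on K
  have hnosupp : ∀ b ∈ K, ∀ x' : X →L[ℝ] ℝ, (b, x') ∈ normalConeGraph C → x' = 0 := by
    intro b hb x' hbx'
    by_contra hne
    exact (Set.eq_empty_iff_forall_notMem.mp hUdisj b) ⟨hKU hb, ⟨x', hne, hbx'⟩⟩
  -- the set D = C ∩ K
  set D : Set X := C ∩ K with hDdef
  have hxD : x ∈ D := ⟨hxC, interior_subset hxK⟩
  obtain ⟨-, hmono, hmaximal⟩ := h D ⟨x, hxD⟩ (hCcl.inter hKcl) (hCconv.inter hKconv)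
  -- the key estimate
  have hkey : ∀ p ∈ normalConeGraph D, p.2 (z - p.1) ≤ 0 := by
    rintro ⟨a, a'⟩ hp
    exact normal_key hCconv hKconv hxC hxK hnosupp hp hzK
  -- the extended graph
  set G' : Set (X × (X →L[ℝ] ℝ)) := normalConeGraph D ∪ {(z, 0)} with hG'def
  have hG'mono : IsMonotoneGraph G' := by
    rintro p (hp | hp) q (hq | hq)
    · exact hmono p hp q hq
    · rw [Set.mem_singleton_iff] at hq
      subst hq
      have := hkey p hp
      simp only [ContinuousLinearMap.sub_apply, ContinuousLinearMap.zero_apply, sub_zero,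
        map_sub] at this ⊢
      linarith
    · rw [Set.mem_singleton_iff] at hp
      subst hp
      have := hkey q hq
      simp only [ContinuousLinearMap.sub_apply, ContinuousLinearMap.zero_apply, zero_sub,
        ContinuousLinearMap.neg_apply, map_sub] at this ⊢
      linarith
    · rw [Set.mem_singleton_iff] at hp hq
      subst hp; subst hq
      simp
  have hEq : G' = normalConeGraph D := hmaximal G' hG'mono Set.subset_union_left
  have hzG' : ((z, (0 : X →L[ℝ] ℝ))) ∈ G' := Set.mem_union_right _ rfl
  rw [hEq] at hzG'
  exact hzC hzG'.1.1
end

section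
/- Let X be a real Hausdorff locally convex space and let C ⊆ X be a nonempty closed convex set that contains no lines and is finite-dimensional, i.e., the linear span of C is finite-dimensional. Then the normal cone N_C is a maximal monotone operator. -/
open Set Classical

variable {X : Type*} [AddCommGroup X] [Module ℝ X] [TopologicalSpace X]
  [IsTopologicalAddGroup X] [ContinuousSMul ℝ X] [LocallyConvexSpace ℝ X] [T2Space X]

/-- Every linear functional on a finite-dimensional subspace of a Hausdorff locally convex
space extends to a continuous linear functional on the whole space. -/
lemma exists_continuous_extension_of_finiteDimensional (W : Submodule ℝ X)
    [FiniteDimensional ℝ W] (g : Module.Dual ℝ ↥W) :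
    ∃ f : X →L[ℝ] ℝ, ∀ w : W, f (w : X) = g w := by
  let r : (X →L[ℝ] ℝ) →ₗ[ℝ] Module.Dual ℝ ↥W :=
    { toFun := fun f => f.toLinearMap.comp W.subtype
      map_add' := fun f₁ f₂ => by ext w; rfl
      map_smul' := fun c f => by ext w; rfl }
  have hr : LinearMap.range r = ⊤ := by
    have h := Submodule.span_eq_top_of_ne_zero (R := ℝ) (M := ↥W)
      (s := (LinearMap.range r : Set (Module.Dual ℝ ↥W)))
      (fun z hz => by
        obtain ⟨f, hf⟩ := SeparatingDual.exists_ne_zero (R := ℝ) (x := (z : X))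
          (by simpa using hz)
        exact ⟨r f, ⟨f, rfl⟩, hf⟩)
    rwa [Submodule.span_eq] at h
  obtain ⟨f, hf⟩ := LinearMap.range_eq_top.mp hr g
  exact ⟨f, fun w => by rw [← hf]; rfl⟩

/-- The normal cone of a nonempty closed convex, line-free, finite-dimensional set is
maximal monotone. -/
theorem normalCone_maximalMonotone_of_lineFree_finiteDimensional (C : Set X)
    (hne : C.Nonempty) (hcl : IsClosed C) (hconv : Convex ℝ C)
    (hlines : ¬ ∃ (x v : X), v ≠ 0 ∧ ∀ t : ℝ, x + t • v ∈ C)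
    (hfd : FiniteDimensional ℝ (Submodule.span ℝ C)) :
    IsMaximalMonotone (normalConeGraph C) := by
  classical
  obtain ⟨c₀, hc₀⟩ := hne
  refine ⟨⟨(c₀, 0), hc₀, fun y _ => by simp⟩, ?_, ?_⟩
  · -- monotonicity
    rintro ⟨a, a'⟩ ⟨ha, ha'⟩ ⟨b, b'⟩ ⟨hb, hb'⟩
    have e1 : a' (a - b) = - a' (b - a) := by rw [← map_neg, neg_sub]
    simp only [ContinuousLinearMap.sub_apply]
    linarith [ha' b hb, hb' a ha, e1]
  · -- maximality
    intro G' hG' hsub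
    have hmem : ∀ q ∈ G', q ∈ normalConeGraph C := by
      rintro ⟨x, x'⟩ hxG
      -- Step A: x is in the portable hull of C
      have hA : ∀ p ∈ normalConeGraph C, p.2 (x - p.1) ≤ 0 := by
        rintro ⟨a, a'⟩ ⟨haC, ha'⟩
        by_contra h
        push_neg at h
        have hx0 : 0 ≤ x' (x - a) := by
          have h0 := hG' (x, x') hxG (a, 0) (hsub ⟨haC, fun y _ => by simp⟩)
          simpa using h0
        set t : ℝ := (x' (x - a) + 1) / a' (x - a) with ht
        have htpos : 0 < t := div_pos (by linarith) h
        have hta : (a, t • a') ∈ normalConeGraph C :=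
          ⟨haC, fun y hy => by
            simp only [ContinuousLinearMap.smul_apply, smul_eq_mul]
            exact mul_nonpos_of_nonneg_of_nonpos htpos.le (ha' y hy)⟩
        have h1 := hG' (x, x') hxG (a, t • a') (hsub hta)
        simp only [ContinuousLinearMap.sub_apply, ContinuousLinearMap.smul_apply,
          smul_eq_mul] at h1
        rw [ht, div_mul_cancel₀ _ (ne_of_gt h)] at h1
        linarith
      -- Step B: x ∈ C
      have hxC : x ∈ C := by
        by_contra hxC
        set W : Submodule ℝ X := Submodule.span ℝ (insert x C) with hWdef
        haveI : FiniteDimensional ℝ W := by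
          rw [hWdef, Submodule.span_insert]
          haveI := hfd
          infer_instance
        have hxW : x ∈ W := Submodule.subset_span (mem_insert _ _)
        have hCW : ∀ y ∈ C, y ∈ W := fun y hy =>
          Submodule.subset_span (mem_insert_of_mem _ hy)
        set n := Module.finrank ℝ ↥W with hn
        have e0 : ↥W ≃ₗ[ℝ] EuclideanSpace ℝ (Fin n) :=
          LinearEquiv.ofFinrankEq _ _ (by simp [hn, finrank_euclideanSpace_fin])
        let e : ↥W ≃L[ℝ] EuclideanSpace ℝ (Fin n) := e0.toContinuousLinearEquiv
        set D : Set (EuclideanSpace ℝ (Fin n)) := {y | ((e.symm y : W) : X) ∈ C} with hD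
        have hDclosed : IsClosed D :=
          hcl.preimage (continuous_subtype_val.comp e.symm.continuous)
        have hDconv : Convex ℝ D := by
          intro y₁ h₁ y₂ h₂ α β hα hβ hαβ
          have hlin : ((e.symm (α • y₁ + β • y₂) : W) : X)
              = α • ((e.symm y₁ : W) : X) + β • ((e.symm y₂ : W) : X) := by
            simp [map_add, map_smul]
          show ((e.symm (α • y₁ + β • y₂) : W) : X) ∈ C
          rw [hlin]
          exact hconv h₁ h₂ hα hβ hαβ
        have hDne : D.Nonempty := by
          refine ⟨e ⟨c₀, hCW c₀ hc₀⟩, ?_⟩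
          show ((e.symm (e ⟨c₀, hCW c₀ hc₀⟩) : W) : X) ∈ C
          rw [e.symm_apply_apply]
          exact hc₀
        set ξ : EuclideanSpace ℝ (Fin n) := e ⟨x, hxW⟩ with hξdef
        have hξ : ξ ∉ D := by
          intro hmemD
          apply hxC
          have h1 : ((e.symm ξ : W) : X) ∈ C := hmemD
          rwa [hξdef, e.symm_apply_apply] at h1
        obtain ⟨a', ha'D, hproj⟩ :=
          exists_norm_eq_iInf_of_complete_convex hDne hDclosed.isComplete hDconv ξ
        have hperp := (norm_eq_iInf_iff_real_inner_le_zero hDconv ha'D).mp hproj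
        have hξa : ξ ≠ a' := fun h => hξ (h ▸ ha'D)
        let g : Module.Dual ℝ ↥W :=
          ((innerSL ℝ (ξ - a')).toLinearMap).comp (e : ↥W →L[ℝ] _).toLinearMap
        obtain ⟨f, hf⟩ := exists_continuous_extension_of_finiteDimensional W g
        set a : X := ((e.symm a' : W) : X) with hadef
        have haC : a ∈ C := ha'D
        have hmemG : (a, f) ∈ normalConeGraph C := by
          refine ⟨haC, fun y hy => ?_⟩
          have h1 : y - a = (((⟨y, hCW y hy⟩ : W) - e.symm a' : W) : X) := by
            simp [hadef]
          rw [h1, hf]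
          have h2 : g ((⟨y, hCW y hy⟩ : W) - e.symm a')
              = (inner ℝ (ξ - a') (e ⟨y, hCW y hy⟩ - a') : ℝ) := by
            change (inner ℝ (ξ - a') (e ((⟨y, hCW y hy⟩ : W) - e.symm a')) : ℝ) = _
            rw [map_sub, e.apply_symm_apply]
          rw [h2]
          exact hperp _ (show ((e.symm (e ⟨y, hCW y hy⟩) : W) : X) ∈ C by
            rw [e.symm_apply_apply]; exact hy)
        have hcontra := hA (a, f) hmemG
        have h1 : x - a = (((⟨x, hxW⟩ : W) - e.symm a' : W) : X) := by
          simp [hadef]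
        rw [h1, hf] at hcontra
        have h2 : g ((⟨x, hxW⟩ : W) - e.symm a') = (inner ℝ (ξ - a') (ξ - a') : ℝ) := by
          change (inner ℝ (ξ - a') (e ((⟨x, hxW⟩ : W) - e.symm a')) : ℝ) = _
          rw [map_sub, e.apply_symm_apply]
        rw [h2, real_inner_self_eq_norm_sq] at hcontra
        have hpos : 0 < ‖ξ - a'‖ := norm_pos_iff.mpr (sub_ne_zero.mpr hξa)
        nlinarith
      refine ⟨hxC, fun y hy => ?_⟩
      have h0 := hG' (x, x') hxG (y, 0) (hsub ⟨hy, fun z _ => by simp⟩)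
      simp only [ContinuousLinearMap.sub_apply, ContinuousLinearMap.zero_apply,
        sub_zero] at h0
      have hx' : x' (y - x) = - x' (x - y) := by rw [← map_neg, neg_sub]
      linarith
    exact Set.Subset.antisymm hmem hsub
end

section
/- Let X be a real Hausdorff locally convex space and let C ⊆ X be a nonempty closed convex set that contains no lines and whose linear span is finite-dimensional. Then the weak-star closure of the range R(N_C) of the normal cone equals the weak-star closure of the effective domain of the support function: cl_{w*} R(N_C) = cl_{w*} (dom σ_C). If, in addition, C is bounded, then cl_{w*} R(N_C) = X*. -/
open Set Classical

section WeakDefs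

variable {X : Type*} [AddCommGroup X] [Module ℝ X] [TopologicalSpace X]
  [IsTopologicalAddGroup X] [ContinuousSMul ℝ X]

/-- Graph of the normal cone `N_C`, with functionals in the weak-star dual `WeakDual ℝ X`. -/
def normalConeGraphW (C : Set X) : Set (X × WeakDual ℝ X) :=
  {p | p.1 ∈ C ∧ ∀ y ∈ C, p.2 (y - p.1) ≤ 0}

/-- Support function `σ_C` on the weak-star dual, with values in `EReal`. -/
noncomputable def supportFnW (C : Set X) (x' : WeakDual ℝ X) : EReal :=
  sSup ((fun x => ((x' x : ℝ) : EReal)) '' C)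

end WeakDefs

open Set Filter Topology Bornology

namespace NCAux

variable {n : ℕ}

def dotp (v x : Fin n → ℝ) : ℝ := ∑ i, v i * x i

lemma dotp_add (v x y : Fin n → ℝ) : dotp v (x + y) = dotp v x + dotp v y := by
  simp [dotp, mul_add, Finset.sum_add_distrib]

lemma dotp_smul (v : Fin n → ℝ) (c : ℝ) (x : Fin n → ℝ) : dotp v (c • x) = c * dotp v x := by
  simp [dotp, Finset.mul_sum]; exact Finset.sum_congr rfl fun i _ => by ring

lemma dotp_sub (v x y : Fin n → ℝ) : dotp v (x - y) = dotp v x - dotp v y := by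
  simp [dotp, mul_sub, Finset.sum_sub_distrib]

lemma dotp_add_left (v w x : Fin n → ℝ) : dotp (v + w) x = dotp v x + dotp w x := by
  simp [dotp, add_mul, Finset.sum_add_distrib]

lemma dotp_smul_left (c : ℝ) (v x : Fin n → ℝ) : dotp (c • v) x = c * dotp v x := by
  simp [dotp, Finset.mul_sum]; exact Finset.sum_congr rfl fun i _ => by ring

lemma continuous_dotp (v : Fin n → ℝ) : Continuous (dotp v) := by
  refine continuous_finset_sum _ fun i _ => (continuous_const.mul (continuous_apply i))

lemma exists_vec (f : (Fin n → ℝ) →L[ℝ] ℝ) : ∃ u : Fin n → ℝ, ∀ x, dotp u x = f x := by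
  refine ⟨fun i => f (fun j => if i = j then 1 else 0), fun x => ?_⟩
  conv_rhs => rw [pi_eq_sum_univ x]
  rw [map_sum]
  simp [dotp, mul_comm]

/-- A linear functional bounded above on a cone is nonpositive there. -/
lemma nonneg_of_lt_on_neg_cone {K : Set (Fin n → ℝ)}
    (hKcone : ∀ c : ℝ, 0 ≤ c → ∀ d ∈ K, c • d ∈ K)
    (f : (Fin n → ℝ) →L[ℝ] ℝ) {u : ℝ} (hu : ∀ a ∈ -K, f a < u) (hu0 : 0 < u) :
    ∀ y ∈ K, 0 ≤ f y := by
  intro y hy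
  by_contra h
  push_neg at h
  set c : ℝ := (u + 1) / (-f y) with hc
  have hfy : 0 < -f y := by linarith
  have hcpos : 0 ≤ c := le_of_lt (div_pos (by linarith) hfy)
  have hmem : -(c • y) ∈ -K := by
    simpa using (hKcone c hcpos y hy)
  have := hu _ hmem
  rw [map_neg, map_smul] at this
  have : -(c * f y) < u := by simpa using this
  have hne : -f y ≠ 0 := ne_of_gt hfy
  have hcv : c * (-f y) = u + 1 := by rw [hc]; exact div_mul_cancel₀ _ hne
  have : -(c * f y) = u + 1 := by linarith [hcv]
  linarith

/-- Existence of a functional strictly negative on a pointed closed cone minus origin. -/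
lemma exists_u {K : Set (Fin n → ℝ)} (hKcl : IsClosed K) (hKconv : Convex ℝ K)
    (hK0 : (0 : Fin n → ℝ) ∈ K)
    (hKcone : ∀ c : ℝ, 0 ≤ c → ∀ d ∈ K, c • d ∈ K)
    (hpointed : ∀ d ∈ K, -d ∈ K → d = 0) :
    ∃ u : Fin n → ℝ, ∀ d ∈ K, d ≠ 0 → dotp u d < 0 := by
  classical
  set S1 : Set (Fin n → ℝ) := K ∩ Metric.sphere 0 1 with hS1
  have hS1c : IsCompact S1 := (isCompact_sphere 0 1).inter_left hKcl
  -- for each p in S1, separating functional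
  have hsep : ∀ p ∈ S1, ∃ f : (Fin n → ℝ) →L[ℝ] ℝ, (∀ y ∈ K, 0 ≤ f y) ∧ 0 < f p := by
    intro p hp
    have hpK : p ∈ K := hp.1
    have hpnorm : ‖p‖ = 1 := by simpa using hp.2
    have hpne : p ∉ -K := by
      intro h
      have : -p ∈ K := by simpa using h
      have := hpointed p hpK this
      rw [this] at hpnorm; simp at hpnorm
    have hnegK : IsClosed (-K) := hKcl.neg
    have hnegKconv : Convex ℝ (-K) := hKconv.neg
    obtain ⟨f, u, hfa, hfu⟩ := geometric_hahn_banach_closed_point hnegKconv hnegK hpne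
    have hu0 : 0 < u := by
      have := hfa 0 (by simpa using hK0)
      simpa using this
    exact ⟨f, nonneg_of_lt_on_neg_cone hKcone f hfa hu0, lt_trans hu0 hfu⟩
  choose F hF0 hFpos using hsep
  -- open cover
  have hcover : S1 ⊆ ⋃ p : S1, {x | 0 < F p p.2 x} := by
    intro x hx
    exact mem_iUnion.2 ⟨⟨x, hx⟩, hFpos x hx⟩
  obtain ⟨t, ht⟩ := hS1c.elim_finite_subcover (fun p : S1 => {x | 0 < F p p.2 x})
    (fun p => isOpen_lt continuous_const (F p p.2).continuous) hcover
  set G : (Fin n → ℝ) →L[ℝ] ℝ := ∑ p ∈ t, F p p.2 with hG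
  have hGpos : ∀ d ∈ K, d ≠ 0 → 0 < G d := by
    intro d hd hdne
    have hnorm : 0 < ‖d‖ := by simpa [norm_pos_iff] using hdne
    set e : Fin n → ℝ := ‖d‖⁻¹ • d with he
    have heK : e ∈ K := hKcone _ (by positivity) d hd
    have heS : e ∈ S1 := by
      refine ⟨heK, ?_⟩
      simp [he, norm_smul, abs_of_pos (inv_pos.2 hnorm), inv_mul_cancel₀ (ne_of_gt hnorm)]
    obtain ⟨p, hpt, hpe⟩ := mem_iUnion₂.1 (ht heS)
    have hGe : 0 < G e := by
      rw [hG]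
      rw [ContinuousLinearMap.sum_apply]
      refine Finset.sum_pos' (fun q _ => hF0 q q.2 e heK) ⟨p, hpt, hpe⟩
    have hde : d = ‖d‖ • e := by
      rw [he, smul_smul, mul_inv_cancel₀ (ne_of_gt hnorm), one_smul]
    have hGd : G d = ‖d‖ * G e := by
      conv_lhs => rw [hde]
      rw [map_smul, smul_eq_mul]
    rw [hGd]; positivity
  obtain ⟨u, hu⟩ := exists_vec (-G)
  refine ⟨u, fun d hd hdne => ?_⟩
  rw [hu]
  simpa using hGpos d hd hdne

/-- Recession direction from an unbounded sequence. -/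
lemma recession_mem {C₀ : Set (Fin n → ℝ)} (hcl : IsClosed C₀) (hconv : Convex ℝ C₀)
    (x : ℕ → Fin n → ℝ) (hx : ∀ k, x k ∈ C₀)
    (hnorm : Tendsto (fun k => ‖x k‖) atTop atTop)
    {d : Fin n → ℝ} (hd : Tendsto (fun k => ‖x k‖⁻¹ • x k) atTop (𝓝 d))
    {y : Fin n → ℝ} (hy : y ∈ C₀) {t : ℝ} (ht : 0 ≤ t) : y + t • d ∈ C₀ := by
  set z : ℕ → Fin n → ℝ := fun k => y + (t / ‖x k‖) • (x k - y) with hz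
  have hmem : ∀ᶠ k in atTop, z k ∈ C₀ := by
    filter_upwards [hnorm.eventually_ge_atTop (max t 1)] with k hk
    have hpos : (0:ℝ) < ‖x k‖ := lt_of_lt_of_le (by norm_num) (le_trans (le_max_right _ _) hk)
    have hle : t / ‖x k‖ ≤ 1 := by
      rw [div_le_one hpos]; exact le_trans (le_max_left _ _) hk
    have hge : 0 ≤ t / ‖x k‖ := div_nonneg ht (le_of_lt hpos)
    have : z k = (1 - t / ‖x k‖) • y + (t / ‖x k‖) • x k := by
      rw [hz]; simp only [sub_smul, smul_sub, one_smul]; abel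
    rw [this]
    exact hconv hy (hx k) (by linarith) hge (by ring)
  have hlim : Tendsto z atTop (𝓝 (y + t • d)) := by
    have h1 : Tendsto (fun k => (‖x k‖)⁻¹) atTop (𝓝 0) := hnorm.inv_tendsto_atTop
    have h2 : Tendsto (fun k => (t / ‖x k‖) • y) atTop (𝓝 ((0:ℝ) • y)) := by
      apply Tendsto.smul_const
      simpa [div_eq_mul_inv] using h1.const_mul t
    have h3 : Tendsto (fun k => t • (‖x k‖⁻¹ • x k)) atTop (𝓝 (t • d)) := hd.const_smul t
    have hzeq : ∀ k, z k = y - (t / ‖x k‖) • y + t • (‖x k‖⁻¹ • x k) := by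
      intro k
      rw [hz]
      simp only [smul_sub, smul_smul]
      rw [div_eq_mul_inv]
      abel_nf
    rw [show z = (fun k => y - (t / ‖x k‖) • y + t • (‖x k‖⁻¹ • x k)) from funext hzeq]
    have := ((tendsto_const_nhds (x := y)).sub h2).add h3
    simpa using this
  exact hcl.mem_of_tendsto hlim hmem

/-- Core finite-dimensional density lemma. -/
lemma core_subset {C₀ : Set (Fin n → ℝ)} (hne : C₀.Nonempty) (hcl : IsClosed C₀)
    (hconv : Convex ℝ C₀)
    (hlf : ¬ ∃ p v : Fin n → ℝ, v ≠ 0 ∧ ∀ t : ℝ, p + t • v ∈ C₀) :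
    {v : Fin n → ℝ | BddAbove (dotp v '' C₀)} ⊆
      closure {v : Fin n → ℝ | ∃ p ∈ C₀, ∀ q ∈ C₀, dotp v q ≤ dotp v p} := by
  classical
  obtain ⟨x₀, hx₀⟩ := hne
  -- the recession cone
  set K : Set (Fin n → ℝ) := {d | ∀ y ∈ C₀, ∀ t : ℝ, 0 ≤ t → y + t • d ∈ C₀} with hK
  have hK0 : (0 : Fin n → ℝ) ∈ K := by
    intro y hy t ht
    show y + t • (0 : Fin n → ℝ) ∈ C₀
    simpa using hy
  have hKcl : IsClosed K := by
    have : K = ⋂ (y : C₀) (t : {t : ℝ // 0 ≤ t}),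
        (fun d => (y : Fin n → ℝ) + (t : ℝ) • d) ⁻¹' C₀ := by
      ext d
      constructor
      · intro h
        exact mem_iInter.2 fun y => mem_iInter.2 fun t => h y.1 y.2 t.1 t.2
      · intro h y hy t ht
        exact mem_iInter.1 (mem_iInter.1 h ⟨y, hy⟩) ⟨t, ht⟩
    rw [this]
    refine isClosed_iInter fun y => isClosed_iInter fun t => ?_
    exact hcl.preimage (by continuity)
  have hKconv : Convex ℝ K := by
    intro d₁ h₁ d₂ h₂ a b ha hb hab
    intro y hy t ht
    have e1 := h₁ y hy t ht
    have e2 := h₂ y hy t ht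
    have hmem := hconv e1 e2 ha hb hab
    have hb' : b = 1 - a := by linarith
    have key : a • (y + t • d₁) + b • (y + t • d₂) = y + t • (a • d₁ + b • d₂) := by
      rw [hb']; module
    rwa [key] at hmem
  have hKcone : ∀ c : ℝ, 0 ≤ c → ∀ d ∈ K, c • d ∈ K := by
    intro c hc d hd y hy t ht
    have := hd y hy (t * c) (mul_nonneg ht hc)
    have key : y + (t * c) • d = y + t • (c • d) := by
      rw [smul_smul]
    rwa [key] at this
  have hKpointed : ∀ d ∈ K, -d ∈ K → d = 0 := by
    intro d hd hnd
    by_contra hdne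
    refine hlf ⟨x₀, d, hdne, fun t => ?_⟩
    rcases le_or_gt 0 t with ht | ht
    · exact hd x₀ hx₀ t ht
    · have := hnd x₀ hx₀ (-t) (by linarith)
      simpa using this
  obtain ⟨u, hu⟩ := exists_u hKcl hKconv hK0 hKcone hKpointed
  intro v hv
  rw [Metric.mem_closure_iff]
  intro ε hε
  set ε' : ℝ := ε / (‖u‖ + 1) with hε'
  have hupos : (0:ℝ) < ‖u‖ + 1 := by positivity
  have hε'pos : 0 < ε' := div_pos hε hupos
  set w : Fin n → ℝ := v + ε' • u with hw
  obtain ⟨b, hb⟩ := hv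
  have hbC : ∀ x ∈ C₀, dotp v x ≤ b := fun x hx => hb ⟨x, hx, rfl⟩
  -- v is nonpositive on K
  have hvK : ∀ d ∈ K, dotp v d ≤ 0 := by
    intro d hd
    by_contra h
    push_neg at h
    set t : ℝ := (b - dotp v x₀ + 1) / dotp v d with hT
    have hbx : dotp v x₀ ≤ b := hbC x₀ hx₀
    have htpos : 0 ≤ t := le_of_lt (div_pos (by linarith) h)
    have hmem := hd x₀ hx₀ t htpos
    have := hbC _ hmem
    rw [dotp_add, dotp_smul] at this
    rw [hT, div_mul_cancel₀ _ (ne_of_gt h)] at this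
    linarith
  -- the superlevel set is bounded
  set M : Set (Fin n → ℝ) := {x ∈ C₀ | dotp w x₀ ≤ dotp w x} with hM
  have hMbd : Bornology.IsBounded M := by
    by_contra hnb
    rw [Metric.isBounded_iff_subset_closedBall (0 : Fin n → ℝ)] at hnb
    push_neg at hnb
    have hex : ∀ k : ℕ, ∃ x, x ∈ M ∧ (k:ℝ) < ‖x‖ := by
      intro k
      obtain ⟨x, hxM, hxball⟩ := not_subset.1 (hnb k)
      refine ⟨x, hxM, ?_⟩
      by_contra hle
      push_neg at hle
      exact hxball (by simpa [Metric.mem_closedBall, dist_eq_norm] using hle)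
    choose xs hxsM hxsn using hex
    have hxsC : ∀ k, xs k ∈ C₀ := fun k => (hxsM k).1
    have hxsnorm : Tendsto (fun k => ‖xs k‖) atTop atTop :=
      tendsto_atTop_mono (fun k => le_of_lt (hxsn k)) tendsto_natCast_atTop_atTop
    have hys : ∀ k : ℕ, (‖xs k‖⁻¹ • xs k) ∈ Metric.sphere (0 : Fin n → ℝ) 1 := by
      intro k
      have h0 : (0:ℝ) < ‖xs k‖ := lt_of_le_of_lt (Nat.cast_nonneg k) (hxsn k)
      simp [norm_smul, abs_of_pos (inv_pos.2 h0), inv_mul_cancel₀ (ne_of_gt h0)]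
    obtain ⟨d, hdS, φ, hφ, hdlim⟩ := (isCompact_sphere (0 : Fin n → ℝ) 1).tendsto_subseq hys
    have hφnorm : Tendsto (fun k => ‖xs (φ k)‖) atTop atTop :=
      hxsnorm.comp hφ.tendsto_atTop
    have hdK : d ∈ K := by
      intro y hy t ht
      exact recession_mem hcl hconv (fun k => xs (φ k)) (fun k => hxsC (φ k)) hφnorm hdlim hy ht
    have hdne : d ≠ 0 := by
      intro h
      have : ‖d‖ = 1 := by simpa using hdS
      rw [h] at this; simp at this
    -- dotp w d < 0
    have hneg : dotp w d < 0 := by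
      rw [hw, dotp_add_left, dotp_smul_left]
      have h1 := hvK d hdK
      have h2 := hu d hdK hdne
      nlinarith
    -- but dotp w d ≥ 0
    have hpos : 0 ≤ dotp w d := by
      have hlim1 : Tendsto (fun k => dotp w (‖xs (φ k)‖⁻¹ • xs (φ k))) atTop (𝓝 (dotp w d)) :=
        ((continuous_dotp w).continuousAt.tendsto).comp hdlim
      have hlim2 : Tendsto (fun k => ‖xs (φ k)‖⁻¹ * dotp w x₀) atTop (𝓝 0) := by
        simpa using hφnorm.inv_tendsto_atTop.mul_const (dotp w x₀)
      refine le_of_tendsto_of_tendsto' hlim2 hlim1 fun k => ?_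
      rw [dotp_smul]
      have h0 : (0:ℝ) ≤ ‖xs (φ k)‖⁻¹ := inv_nonneg.2 (norm_nonneg _)
      exact mul_le_mul_of_nonneg_left ((hxsM (φ k)).2) h0
    linarith
  have hMcl : IsClosed M := by
    have : M = C₀ ∩ (dotp w)⁻¹' (Ici (dotp w x₀)) := by
      ext x; simp [hM, And.comm]
    rw [this]
    exact hcl.inter (isClosed_Ici.preimage (continuous_dotp w))
  have hMcomp : IsCompact M := Metric.isCompact_iff_isClosed_bounded.2 ⟨hMcl, hMbd⟩
  have hMne : M.Nonempty := ⟨x₀, hx₀, le_refl _⟩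
  obtain ⟨p, hpM, hpmax⟩ := hMcomp.exists_isMaxOn hMne (continuous_dotp w).continuousOn
  refine ⟨w, ⟨p, hpM.1, fun q hq => ?_⟩, ?_⟩
  · rcases le_or_gt (dotp w x₀) (dotp w q) with hle | hlt
    · exact hpmax ⟨hq, hle⟩
    · exact le_trans (le_of_lt hlt) (hpmax ⟨hx₀, le_refl _⟩)
  · rw [dist_eq_norm, hw]
    have : v - (v + ε' • u) = -(ε' • u) := by abel
    rw [this, norm_neg, norm_smul, Real.norm_eq_abs, abs_of_pos hε'pos, hε']
    rw [div_mul_eq_mul_div, div_lt_iff₀ hupos]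
    nlinarith [norm_nonneg u]

/-- Closure of the set of attaining functionals equals closure of the barrier cone. -/
lemma core_eq {C₀ : Set (Fin n → ℝ)} (hne : C₀.Nonempty) (hcl : IsClosed C₀)
    (hconv : Convex ℝ C₀)
    (hlf : ¬ ∃ p v : Fin n → ℝ, v ≠ 0 ∧ ∀ t : ℝ, p + t • v ∈ C₀) :
    closure {v : Fin n → ℝ | ∃ p ∈ C₀, ∀ q ∈ C₀, dotp v q ≤ dotp v p}
      = closure {v : Fin n → ℝ | BddAbove (dotp v '' C₀)} := by
  apply Subset.antisymm
  · apply closure_mono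
    rintro v ⟨p, hp, hmax⟩
    exact ⟨dotp v p, by rintro z ⟨q, hq, rfl⟩; exact hmax q hq⟩
  · have h := core_subset hne hcl hconv hlf
    calc closure {v : Fin n → ℝ | BddAbove (dotp v '' C₀)}
        ⊆ closure (closure {v : Fin n → ℝ | ∃ p ∈ C₀, ∀ q ∈ C₀, dotp v q ≤ dotp v p}) :=
          closure_mono h
      _ = _ := closure_closure

lemma core_bounded {C₀ : Set (Fin n → ℝ)} (hne : C₀.Nonempty) (hcl : IsClosed C₀)
    (hbd : Bornology.IsBounded C₀) :
    {v : Fin n → ℝ | ∃ p ∈ C₀, ∀ q ∈ C₀, dotp v q ≤ dotp v p} = univ := by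
  refine eq_univ_of_forall fun v => ?_
  have hcomp : IsCompact C₀ := Metric.isCompact_iff_isClosed_bounded.2 ⟨hcl, hbd⟩
  obtain ⟨p, hp, hmax⟩ := hcomp.exists_isMaxOn hne (continuous_dotp v).continuousOn
  exact ⟨p, hp, fun q hq => hmax hq⟩

section Reduction

variable {X : Type*} [AddCommGroup X] [Module ℝ X] [TopologicalSpace X]
  [IsTopologicalAddGroup X] [ContinuousSMul ℝ X]

lemma weak_eval_add (f g : WeakDual ℝ X) (x : X) : (f + g) x = f x + g x := rfl

lemma weak_eval_smul (c : ℝ) (f : WeakDual ℝ X) (x : X) : (c • f) x = c * f x := rfl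

lemma weak_eval_sum {ι : Type*} (s : Finset ι) (F : ι → WeakDual ℝ X) (x : X) :
    (∑ i ∈ s, F i) x = ∑ i ∈ s, F i x := by
  classical
  induction s using Finset.induction with
  | empty => rfl
  | insert a s h ih => rw [Finset.sum_insert h, Finset.sum_insert h, weak_eval_add, ih]

/-- Pulling back closures along the restriction map, given a dual family. -/
lemma closure_preimage {m : ℕ} (e : Fin m → X) (g : Fin m → WeakDual ℝ X)
    (hge : ∀ i j, g i (e j) = if i = j then 1 else 0) (S : Set (Fin m → ℝ)) :
    closure ((fun f : WeakDual ℝ X => fun i => f (e i)) ⁻¹' S)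
      = (fun f : WeakDual ℝ X => fun i => f (e i)) ⁻¹' closure S := by
  set r : WeakDual ℝ X → (Fin m → ℝ) := fun f => fun i => f (e i) with hr
  have hrcont : Continuous r := continuous_pi fun i => WeakDual.eval_continuous (e i)
  apply Subset.antisymm
  · exact hrcont.closure_preimage_subset S
  · intro f hf
    rw [mem_closure_iff_nhds]
    intro U hU
    set φ : (Fin m → ℝ) → WeakDual ℝ X := fun t => f + ∑ i, (t i - r f i) • g i with hφ
    have hφcont : Continuous φ := by
      refine continuous_const.add (continuous_finset_sum _ fun i _ => ?_)
      exact (((continuous_apply i).sub continuous_const)).smul continuous_const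
    have hφrf : φ (r f) = f := by
      rw [hφ]; simp
    have hUmem : φ ⁻¹' U ∈ nhds (r f) := by
      apply hφcont.continuousAt.preimage_mem_nhds
      rwa [hφrf]
    obtain ⟨t, htU, htS⟩ := mem_closure_iff_nhds.1 hf _ hUmem
    refine ⟨φ t, htU, ?_⟩
    show r (φ t) ∈ S
    have hrφ : r (φ t) = t := by
      funext j
      show (f + ∑ i, (t i - r f i) • g i) (e j) = t j
      rw [weak_eval_add, weak_eval_sum]
      simp only [weak_eval_smul, hge, mul_ite, mul_one, mul_zero]
      rw [Finset.sum_ite_eq' Finset.univ j]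
      simp only [Finset.mem_univ, if_true]
      show f (e j) + (t j - f (e j)) = t j
      ring
    rwa [hrφ]

end Reduction

section DualFamily

variable {X : Type*} [AddCommGroup X] [Module ℝ X] [TopologicalSpace X]
  [IsTopologicalAddGroup X] [ContinuousSMul ℝ X] [LocallyConvexSpace ℝ X] [T2Space X]

/-- A dual family for a finite linearly independent family in a locally convex space. -/
lemma exists_dual_family {m : ℕ} {e : Fin m → X} (he : LinearIndependent ℝ e) :
    ∃ g : Fin m → (X →L[ℝ] ℝ), ∀ i j, g i (e j) = if i = j then 1 else 0 := by
  classical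
  have hsep : ∀ i : Fin m, ∃ gi : X →L[ℝ] ℝ, gi (e i) = 1 ∧ ∀ j, j ≠ i → gi (e j) = 0 := by
    intro i
    set W : Submodule ℝ X := Submodule.span ℝ (e '' {i}ᶜ) with hW
    haveI : Module.Finite ℝ W :=
      Module.Finite.span_of_finite ℝ ((Set.finite_range e).subset (image_subset_range _ _))
    have hWcl : IsClosed (W : Set X) := W.closed_of_finiteDimensional
    have hWconv : Convex ℝ (W : Set X) := W.convex
    have hnotmem : e i ∉ (W : Set X) := he.notMem_span_image (by simp)
    obtain ⟨f, u, hfa, hfu⟩ := geometric_hahn_banach_closed_point hWconv hWcl hnotmem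
    have hu0 : 0 < u := by
      have := hfa 0 W.zero_mem
      simpa using this
    have hfW : ∀ y ∈ W, f y = 0 := by
      intro y hy
      by_contra hne
      have hmem : ((u + 1) / f y) • y ∈ W := W.smul_mem _ hy
      have := hfa _ hmem
      rw [map_smul, smul_eq_mul, div_mul_cancel₀ _ hne] at this
      linarith
    have hfei : 0 < f (e i) := lt_trans hu0 hfu
    refine ⟨(f (e i))⁻¹ • f, ?_, ?_⟩
    · rw [ContinuousLinearMap.smul_apply, smul_eq_mul, inv_mul_cancel₀ (ne_of_gt hfei)]
    · intro j hj
      have hmem : e j ∈ W := Submodule.subset_span ⟨j, by simp [hj], rfl⟩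
      rw [ContinuousLinearMap.smul_apply, smul_eq_mul, hfW _ hmem, mul_zero]
  choose g hg1 hg2 using hsep
  refine ⟨g, fun i j => ?_⟩
  by_cases h : i = j
  · subst h; simp [hg1]
  · simp [h, hg2 i j (fun hji => h hji.symm)]

end DualFamily

section Support

variable {X : Type*} [AddCommGroup X] [Module ℝ X] [TopologicalSpace X]
  [IsTopologicalAddGroup X] [ContinuousSMul ℝ X]

lemma supportFnW_lt_top_iff {C : Set X} (hne : C.Nonempty) (f : WeakDual ℝ X) :
    supportFnW C f < ⊤ ↔ BddAbove ((fun x => f x) '' C) := by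
  constructor
  · intro h
    set s : EReal := sSup ((fun x => ((f x : ℝ) : EReal)) '' C) with hs
    have htop : s ≠ ⊤ := ne_of_lt h
    have hbot : s ≠ ⊥ := by
      obtain ⟨x, hx⟩ := hne
      have hy : ((f x : ℝ) : EReal) ≤ s := le_sSup ⟨x, hx, rfl⟩
      intro hb
      rw [hb, le_bot_iff] at hy
      exact (EReal.coe_ne_bot _) hy
    refine ⟨s.toReal, ?_⟩
    rintro z ⟨x, hx, rfl⟩
    have hz : ((f x : ℝ) : EReal) ≤ s := le_sSup ⟨x, hx, rfl⟩
    rw [← EReal.coe_toReal htop hbot] at hz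
    exact_mod_cast hz
  · rintro ⟨a, ha⟩
    have hle : supportFnW C f ≤ (a : EReal) := by
      apply sSup_le
      rintro z ⟨x, hx, rfl⟩
      have := ha ⟨x, hx, rfl⟩
      show ((f x : ℝ) : EReal) ≤ (a : EReal)
      exact_mod_cast this
    exact lt_of_le_of_lt hle (EReal.coe_lt_top a)

end Support

end NCAux

open NCAux Filter Topology

variable {X : Type*} [AddCommGroup X] [Module ℝ X] [TopologicalSpace X]
  [IsTopologicalAddGroup X] [ContinuousSMul ℝ X] [LocallyConvexSpace ℝ X] [T2Space X]

/-- For a nonempty closed convex, line-free, finite-dimensional set `C`, the weak-star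
closure of `R(N_C)` equals the weak-star closure of `dom σ_C`; if moreover `C` is
bounded, this closure is all of `X*`. -/
theorem closure_range_normalCone_eq (C : Set X)
    (hne : C.Nonempty) (hcl : IsClosed C) (hconv : Convex ℝ C)
    (hlines : ¬ ∃ (x v : X), v ≠ 0 ∧ ∀ t : ℝ, x + t • v ∈ C)
    (hfd : FiniteDimensional ℝ (Submodule.span ℝ C)) :
    closure {x' : WeakDual ℝ X | ∃ x : X, (x, x') ∈ normalConeGraphW C} =
      closure {x' : WeakDual ℝ X | supportFnW C x' < ⊤} ∧
    (Bornology.IsVonNBounded ℝ C →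
      closure {x' : WeakDual ℝ X | ∃ x : X, (x, x') ∈ normalConeGraphW C} =
        (univ : Set (WeakDual ℝ X))) := by
  classical
  haveI := hfd
  set E : Submodule ℝ X := Submodule.span ℝ C with hE
  set m : ℕ := Module.finrank ℝ E with hm
  let b : Module.Basis (Fin m) ℝ E := Module.finBasis ℝ E
  set e : Fin m → X := fun i => (b i : X) with he
  have hei : LinearIndependent ℝ e := by
    have := b.linearIndependent
    exact this.map' E.subtype (Submodule.ker_subtype E)
  obtain ⟨g, hge⟩ := exists_dual_family hei
  -- the restriction map and coordinates
  set r : WeakDual ℝ X → (Fin m → ℝ) := fun f => fun i => f (e i) with hr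
  set τ : (Fin m → ℝ) → X := fun t => ∑ i, t i • e i with hτ
  set C₀ : Set (Fin m → ℝ) := τ ⁻¹' C with hC₀
  -- τ as a linear map
  set τL : (Fin m → ℝ) →ₗ[ℝ] X :=
    { toFun := τ
      map_add' := by
        intro t s
        simp only [hτ, Pi.add_apply, add_smul, Finset.sum_add_distrib]
      map_smul' := by
        intro c t
        simp only [hτ, Pi.smul_apply, smul_eq_mul, RingHom.id_apply, Finset.smul_sum, smul_smul] }
    with hτL
  have hτcont : Continuous τ :=
    continuous_finset_sum _ fun i _ => (continuous_apply i).smul continuous_const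
  have hτinj : Function.Injective τ := by
    intro t s hts
    have h0 : ∑ i, (t i - s i) • e i = 0 := by
      simp only [sub_smul, Finset.sum_sub_distrib]
      rw [show (∑ i, t i • e i) = τ t from rfl, show (∑ i, s i • e i) = τ s from rfl, hts, sub_self]
    have h1 := Fintype.linearIndependent_iff.1 hei (fun i => t i - s i) h0
    funext i
    have h2 : t i - s i = 0 := h1 i
    linarith
  -- surjectivity onto C
  have hτC : ∀ x ∈ C, ∃ p ∈ C₀, τ p = x := by
    intro x hx
    have hxE : x ∈ E := Submodule.subset_span hx
    set p : Fin m → ℝ := fun i => b.repr ⟨x, hxE⟩ i with hp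
    have hτp : τ p = x := by
      have hsum := b.sum_repr ⟨x, hxE⟩
      have := congrArg (E.subtype) hsum
      rw [map_sum] at this
      simpa [hτ, hp] using this
    exact ⟨p, by rw [hC₀, mem_preimage, hτp]; exact hx, hτp⟩
  have hC₀ne : C₀.Nonempty := by
    obtain ⟨x, hx⟩ := hne
    obtain ⟨p, hp, _⟩ := hτC x hx
    exact ⟨p, hp⟩
  have hC₀cl : IsClosed C₀ := hcl.preimage hτcont
  have hC₀conv : Convex ℝ C₀ := hconv.linear_preimage τL
  have hC₀lf : ¬ ∃ p v : Fin m → ℝ, v ≠ 0 ∧ ∀ t : ℝ, p + t • v ∈ C₀ := by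
    rintro ⟨p, v, hv, hall⟩
    refine hlines ⟨τ p, τ v, ?_, fun t => ?_⟩
    · intro h
      exact hv (hτinj (by rw [h, hτ]; simp))
    · have := hall t
      rw [hC₀, mem_preimage] at this
      have heq : τ (p + t • v) = τ p + t • τ v := by
        rw [show τ (p + t • v) = τL (p + t • v) from rfl, map_add, map_smul]; rfl
      rwa [heq] at this
  -- evaluation formula
  have hfτ : ∀ (f : WeakDual ℝ X) (t : Fin m → ℝ), f (τ t) = dotp (r f) t := by
    intro f t
    rw [hτ, map_sum]
    simp only [map_smul, smul_eq_mul]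
    exact Finset.sum_congr rfl fun i _ => mul_comm _ _
  -- identification of the two sets as preimages
  have hset1 : {x' : WeakDual ℝ X | ∃ x : X, (x, x') ∈ normalConeGraphW C}
      = r ⁻¹' {v : Fin m → ℝ | ∃ p ∈ C₀, ∀ q ∈ C₀, dotp v q ≤ dotp v p} := by
    ext f
    constructor
    · rintro ⟨x, hxC', hmax'⟩
      have hxC : x ∈ C := hxC'
      have hmax : ∀ y ∈ C, f (y - x) ≤ 0 := hmax'
      obtain ⟨p, hp, hτp⟩ := hτC x hxC
      refine ⟨p, hp, fun q hq => ?_⟩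
      have hq' := hmax (τ q) hq
      rw [map_sub] at hq'
      rw [hfτ f q] at hq'
      have hfx : f x = dotp (r f) p := by rw [← hτp, hfτ]
      rw [hfx] at hq'
      linarith
    · rintro ⟨p, hp, hle⟩
      refine ⟨τ p, hp, fun y hy => ?_⟩
      show f (y - τ p) ≤ 0
      obtain ⟨q, hq, hτq⟩ := hτC y hy
      rw [← hτq, map_sub, hfτ f q, hfτ f p]
      have := hle q hq
      linarith
  have hset2 : {x' : WeakDual ℝ X | supportFnW C x' < ⊤}
      = r ⁻¹' {v : Fin m → ℝ | BddAbove (dotp v '' C₀)} := by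
    ext f
    rw [mem_setOf_eq, supportFnW_lt_top_iff hne f]
    have himg : (fun x => f x) '' C = dotp (r f) '' C₀ := by
      apply Subset.antisymm
      · rintro z ⟨x, hx, rfl⟩
        obtain ⟨p, hp, hτp⟩ := hτC x hx
        refine ⟨p, hp, ?_⟩
        show dotp (r f) p = f x
        rw [← hτp, hfτ f p]
      · rintro z ⟨p, hp, rfl⟩
        refine ⟨τ p, hp, ?_⟩
        show f (τ p) = dotp (r f) p
        exact hfτ f p
    rw [himg]
    rfl
  constructor
  · rw [hset1, hset2, closure_preimage e (fun i => g i) hge, closure_preimage e (fun i => g i) hge,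
      core_eq hC₀ne hC₀cl hC₀conv hC₀lf]
  · intro hbdd
    -- C₀ is the image of C under a continuous linear map, hence bounded
    set G : X →L[ℝ] (Fin m → ℝ) := ContinuousLinearMap.pi g with hG
    have hGC : G '' C = C₀ := by
      apply Subset.antisymm
      · rintro z ⟨x, hx, rfl⟩
        obtain ⟨p, hp, hτp⟩ := hτC x hx
        have : G x = p := by
          funext i
          show g i x = p i
          rw [← hτp, show (g i : X → ℝ) (τ p) = dotp (r (g i : WeakDual ℝ X)) p from hfτ _ p]
          simp only [dotp, hr]
          rw [Finset.sum_congr rfl fun j _ => by exact congrArg (fun c => c * p j) (hge i j)]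
          simp [Finset.sum_ite_eq' Finset.univ i]
        rw [this]; exact hp
      · rintro p hp
        refine ⟨τ p, hp, ?_⟩
        funext i
        show g i (τ p) = p i
        rw [show (g i : X → ℝ) (τ p) = dotp (r (g i : WeakDual ℝ X)) p from hfτ _ p]
        simp only [dotp, hr]
        rw [Finset.sum_congr rfl fun j _ => by exact congrArg (fun c => c * p j) (hge i j)]
        simp [Finset.sum_ite_eq' Finset.univ i]
    have hC₀bd : Bornology.IsBounded C₀ := by
      rw [← hGC]
      exact (NormedSpace.isVonNBounded_iff ℝ).1 (hbdd.image G)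
    rw [hset1, closure_preimage e (fun i => g i) hge,
      core_bounded hC₀ne hC₀cl hC₀bd]
    simp
end

section
/- Let X be a real Banach space and let C ⊆ X be a nonempty closed convex bounded set. Then the set R(N_C) of support functionals of C is dense in X* in the norm (strong) topology. -/
open Set Classical Filter Topology

variable {X : Type*} [NormedAddCommGroup X] [NormedSpace ℝ X] [CompleteSpace X]

lemma bp_exists_maximal_point (C : Set X) (hne : C.Nonempty) (hcl : IsClosed C)
    (hbdd : Bornology.IsBounded C) (x' : X →L[ℝ] ℝ) {ε : ℝ} (hε : 0 < ε) :
    ∃ x₀ ∈ C, ∀ x ∈ C, ε * ‖x - x₀‖ ≤ x' x - x' x₀ → x = x₀ := by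
  set r : ↥C → ↥C → Prop := fun a b => ε * ‖(b : X) - a‖ ≤ x' b - x' a with hr
  have htrans : ∀ {a b c : ↥C}, r a b → r b c → r a c := by
    intro a b c hab hbc
    have htri : ‖(c : X) - a‖ ≤ ‖(c : X) - b‖ + ‖(b : X) - a‖ :=
      norm_sub_le_norm_sub_add_norm_sub _ _ _
    have := mul_le_mul_of_nonneg_left htri hε.le
    simp only [hr] at hab hbc ⊢
    nlinarith [hab, hbc]
  obtain ⟨M, hM⟩ := hbdd.exists_norm_le
  have hbound : ∀ a : ↥C, x' (a : X) ≤ ‖x'‖ * M := by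
    intro a
    calc x' (a : X) ≤ ‖x' (a : X)‖ := le_abs_self _
      _ ≤ ‖x'‖ * ‖(a : X)‖ := x'.le_opNorm _
      _ ≤ ‖x'‖ * M := by
          exact mul_le_mul_of_nonneg_left (hM _ a.2) (norm_nonneg _)
  have hchains : ∀ c : Set ↥C, IsChain r c → ∃ ub, ∀ a ∈ c, r a ub := by
    intro c hc
    rcases c.eq_empty_or_nonempty with rfl | hcne
    · exact ⟨⟨hne.choose, hne.choose_spec⟩, by simp⟩
    set f : ↥C → ℝ := fun a => x' (a : X) with hf
    have himne : (f '' c).Nonempty := hcne.image _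
    have hbdda : BddAbove (f '' c) := ⟨‖x'‖ * M, by rintro _ ⟨a, -, rfl⟩; exact hbound a⟩
    set s := sSup (f '' c) with hs
    have hex : ∀ n : ℕ, ∃ a ∈ c, s - 1 / (n + 1) < f a := by
      intro n
      have : s - 1 / (n + 1) < s := by
        have : (0:ℝ) < 1 / (n + 1) := by positivity
        linarith
      obtain ⟨_, ⟨a, hac, rfl⟩, hlt⟩ := exists_lt_of_lt_csSup himne this
      exact ⟨a, hac, hlt⟩
    choose a hamem hagt using hex
    have hale : ∀ n, f (a n) ≤ s := fun n => le_csSup hbdda ⟨a n, hamem n, rfl⟩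
    have hyle : ∀ y ∈ c, f y ≤ s := fun y hy => le_csSup hbdda ⟨y, hy, rfl⟩
    -- key estimate
    have key : ∀ (n : ℕ), ∀ y ∈ c, ε * ‖(a n : X) - y‖ ≤ f (a n) - f y + 2 / (n + 1) := by
      intro n y hy
      have hpos : (0:ℝ) < 1 / (n + 1) := by positivity
      rcases eq_or_ne y (a n) with rfl | hne'
      · simp only [sub_self, norm_zero, mul_zero]
        have : (0:ℝ) < 2 / (n+1) := by positivity
        linarith
      rcases hc hy (hamem n) hne' with h | h
      · -- r y (a n)
        simp only [hr] at h
        have : (0:ℝ) < 2 / (n+1) := by positivity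
        simp only [hf]
        linarith [h]
      · -- r (a n) y
        simp only [hr] at h
        have h1 : f y ≤ s := hyle y hy
        have h2 : s - 1 / (n+1) < f (a n) := hagt n
        have h3 : ‖(a n : X) - y‖ = ‖(y : X) - a n‖ := norm_sub_rev _ _
        have h4 : (2:ℝ) / (n+1) = 1/(n+1) + 1/(n+1) := by ring
        simp only [hf] at h1 h2 ⊢
        rw [h3]
        linarith [h]
    -- Cauchy
    have hcauchy : CauchySeq (fun n => (a n : X)) := by
      refine cauchySeq_of_le_tendsto_0 (fun N : ℕ => 3 / (ε * (N + 1))) ?_ ?_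
      · intro n m N hn hm
        have h1 : ε * ‖(a n : X) - a m‖ ≤ f (a n) - f (a m) + 2 / (n + 1) :=
          key n (a m) (hamem m)
        have h2 : f (a n) ≤ s := hale n
        have h3 : s - 1 / (m+1) < f (a m) := hagt m
        have hNn : ((N:ℝ)+1) ≤ (n:ℝ)+1 := by exact_mod_cast Nat.succ_le_succ hn
        have hNm : ((N:ℝ)+1) ≤ (m:ℝ)+1 := by exact_mod_cast Nat.succ_le_succ hm
        have h5 : (1:ℝ)/(n+1) ≤ 1/(N+1) := one_div_le_one_div_of_le (by positivity) hNn
        have h6 : (1:ℝ)/(m+1) ≤ 1/(N+1) := one_div_le_one_div_of_le (by positivity) hNm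
        have h7 : ε * ‖(a n : X) - a m‖ ≤ 3 / (N+1) := by
          have e1 : (2:ℝ)/(n+1) = 2*(1/(n+1)) := by ring
          have e2 : (3:ℝ)/(N+1) = 1/(N+1) + 2*(1/(N+1)) := by ring
          rw [e1] at h1
          linarith
        rw [dist_eq_norm]
        have hεN : (0:ℝ) < ε * ((N:ℝ)+1) := by positivity
        rw [le_div_iff₀ hεN]
        rw [le_div_iff₀ (show (0:ℝ) < (N:ℝ)+1 by positivity)] at h7
        nlinarith [h7]
      · have h1 : Tendsto (fun N : ℕ => (1:ℝ)/(N+1)) atTop (𝓝 0) :=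
          tendsto_one_div_add_atTop_nhds_zero_nat
        have : (fun N : ℕ => 3 / (ε * (N + 1))) = fun N : ℕ => (3/ε) * ((1:ℝ)/(N+1)) := by
          funext N; rw [eq_comm, mul_one_div, div_div]
        rw [this]
        simpa using h1.const_mul (3/ε)
    obtain ⟨xb, hxb⟩ := cauchySeq_tendsto_of_complete hcauchy
    have hxbC : xb ∈ C := hcl.mem_of_tendsto hxb (Eventually.of_forall fun n => (a n).2)
    refine ⟨⟨xb, hxbC⟩, ?_⟩
    intro y hy
    simp only [hr]
    have hL : Tendsto (fun n => ε * ‖(a n : X) - y‖) atTop (𝓝 (ε * ‖xb - (y:X)‖)) :=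
      (tendsto_const_nhds.mul ((hxb.sub tendsto_const_nhds).norm))
    have hR : Tendsto (fun n => f (a n) - f y + 2 / (n+1 : ℝ)) atTop
        (𝓝 (x' xb - f y + 0)) := by
      refine Tendsto.add ?_ ?_
      · exact (((x'.continuous.tendsto xb).comp hxb).sub tendsto_const_nhds)
      · have : (fun n : ℕ => (2:ℝ)/(n+1)) = fun n : ℕ => 2 * ((1:ℝ)/(n+1)) := by
          funext n; ring
        rw [this]
        simpa using tendsto_one_div_add_atTop_nhds_zero_nat.const_mul (2:ℝ)
    have := le_of_tendsto_of_tendsto' hL hR fun n => key n y hy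
    simpa using this
  obtain ⟨m, hm⟩ := exists_maximal_of_chains_bounded hchains (fun {a b c} => htrans)
  refine ⟨(m : X), m.2, ?_⟩
  intro x hx hle
  have h1 : r m ⟨x, hx⟩ := hle
  have h2 : r ⟨x, hx⟩ m := hm _ h1
  simp only [hr] at h1 h2
  have h3 : ‖(m : X) - x‖ = ‖x - (m : X)‖ := norm_sub_rev _ _
  have : ε * ‖x - (m : X)‖ ≤ 0 := by rw [h3] at h2; linarith
  have h4 : ‖x - (m : X)‖ ≤ 0 := by nlinarith [norm_nonneg (x - (m : X))]
  have h5 : ‖x - (m : X)‖ = 0 := le_antisymm h4 (norm_nonneg _)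
  have := norm_eq_zero.mp h5
  exact sub_eq_zero.mp this

set_option maxHeartbeats 2000000 in
/-- In a Banach space, the support functionals of a nonempty closed convex bounded set
are dense in `X*` for the norm topology. -/
theorem range_normalCone_dense_of_bounded (C : Set X)
    (hne : C.Nonempty) (hcl : IsClosed C) (hconv : Convex ℝ C)
    (hbdd : Bornology.IsBounded C) :
    Dense {x' : X →L[ℝ] ℝ | ∃ x : X, (x, x') ∈ normalConeGraph C} := by
  rw [Metric.dense_iff]
  intro x' rr hrr
  have h0S : (0 : X →L[ℝ] ℝ) ∈ {x' : X →L[ℝ] ℝ | ∃ x : X, (x, x') ∈ normalConeGraph C} := by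
    obtain ⟨z, hz⟩ := hne
    exact ⟨z, hz, fun y hy => by simp⟩
  by_cases hsm : ‖x'‖ < rr
  · exact ⟨0, by simpa [Metric.mem_ball, dist_eq_norm] using hsm, h0S⟩
  push_neg at hsm
  have hx'pos : 0 < ‖x'‖ := lt_of_lt_of_le hrr hsm
  set ε := min (rr/9) (‖x'‖/4) with hεdef
  have hεpos : 0 < ε := lt_min (by positivity) (by positivity)
  have hε4 : ε ≤ ‖x'‖/4 := min_le_right _ _
  have hε9 : ε ≤ rr/9 := min_le_left _ _
  -- choose v with ‖v‖ ≤ 1 and ‖x'‖/2 < x' v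
  obtain ⟨v0, hv0n, hv0gt⟩ := x'.exists_lt_apply_of_lt_opNorm (show ‖x'‖/2 < ‖x'‖ by linarith)
  obtain ⟨v, hvn, hvgt⟩ : ∃ v : X, ‖v‖ ≤ 1 ∧ ‖x'‖/2 < x' v := by
    rcases le_or_gt 0 (x' v0) with h | h
    · exact ⟨v0, hv0n.le, by rwa [Real.norm_eq_abs, abs_of_nonneg h] at hv0gt⟩
    · refine ⟨-v0, by simpa using hv0n.le, ?_⟩
      rw [map_neg]
      rwa [Real.norm_eq_abs, abs_of_neg h] at hv0gt
  set α := x' v with hαdef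
  have hαle : α ≤ ‖x'‖ := by
    calc α ≤ ‖x' v‖ := le_abs_self _
      _ ≤ ‖x'‖ * ‖v‖ := x'.le_opNorm v
      _ ≤ ‖x'‖ := mul_le_of_le_one_right (norm_nonneg _) hvn
  have hεα : ε < α := by linarith
  have hαpos : 0 < α := by linarith
  have hαne : α ≠ 0 := ne_of_gt hαpos
  -- maximal point
  obtain ⟨x₀, hx₀C, hmax⟩ := bp_exists_maximal_point C hne hcl hbdd x' hεpos
  -- the open cone
  set K := {h : X | ε * ‖h‖ < x' h} with hKdef
  have hKopen : IsOpen K :=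
    isOpen_lt (continuous_const.mul continuous_norm) x'.continuous
  have hKconv : Convex ℝ K := by
    intro h₁ hh₁ h₂ hh₂ a b ha hb hab
    have key : a*(ε*‖h₁‖) + b*(ε*‖h₂‖) < a * x' h₁ + b * x' h₂ := by
      rcases eq_or_lt_of_le ha with h0 | hapos
      · have hb1 : b = 1 := by linarith
        rw [← h0, hb1]
        simp only [zero_mul, one_mul, zero_add]
        exact hh₂
      · exact add_lt_add_of_lt_of_le (mul_lt_mul_of_pos_left hh₁ hapos)
          (mul_le_mul_of_nonneg_left (le_of_lt hh₂) hb)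
    have hx'comb : x' (a•h₁+b•h₂) = a * x' h₁ + b * x' h₂ := by
      simp [map_add, map_smul]
    show ε * ‖a•h₁+b•h₂‖ < x' (a•h₁+b•h₂)
    have hnorm : ‖a•h₁+b•h₂‖ ≤ a*‖h₁‖ + b*‖h₂‖ := by
      calc ‖a•h₁+b•h₂‖ ≤ ‖a•h₁‖+‖b•h₂‖ := norm_add_le _ _
        _ = a*‖h₁‖+b*‖h₂‖ := by
            rw [norm_smul, norm_smul, Real.norm_of_nonneg ha, Real.norm_of_nonneg hb]
    rw [hx'comb]
    nlinarith [mul_le_mul_of_nonneg_left hnorm hεpos.le]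
  have hKcone : ∀ h ∈ K, ∀ t : ℝ, 0 < t → t • h ∈ K := by
    intro h hh t ht
    show ε * ‖t • h‖ < x' (t • h)
    rw [norm_smul, Real.norm_of_nonneg ht.le, map_smul, smul_eq_mul]
    have : ε * ‖h‖ < x' h := hh
    nlinarith
  have hvK : v ∈ K := by
    show ε * ‖v‖ < x' v
    have : ε * ‖v‖ ≤ ε := mul_le_of_le_one_right hεpos.le hvn
    linarith
  -- disjointness
  have hdisj : Disjoint ((fun h => x₀ + h) '' K) C := by
    rw [Set.disjoint_left]
    rintro p ⟨h, hhK, rfl⟩ hpC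
    have hlt : ε * ‖h‖ < x' h := hhK
    have hle : ε * ‖(x₀ + h) - x₀‖ ≤ x' (x₀ + h) - x' x₀ := by
      simp only [add_sub_cancel_left, map_add]
      linarith
    have := hmax (x₀ + h) hpC hle
    have hh0 : h = 0 := by
      have := congrArg (fun z => z - x₀) this
      simpa using this
    rw [hh0] at hlt
    simp at hlt
  obtain ⟨φ, sep, hφ1, hφ2⟩ :=
    geometric_hahn_banach_open (hKconv.translate x₀) ((isOpenMap_add_left x₀) K hKopen)
      hconv hdisj
  -- φ a < sep on x₀ + K, sep ≤ φ b on C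
  have hφK : ∀ h ∈ K, φ h < 0 := by
    intro h hh
    have h1 : φ (x₀ + h) < sep := hφ1 _ ⟨h, hh, rfl⟩
    have h2 : sep ≤ φ x₀ := hφ2 _ hx₀C
    rw [map_add] at h1
    linarith
  have hφx₀ : φ x₀ ≤ sep := by
    have hseq : ∀ n : ℕ, φ x₀ + (1/(n+1)) * φ v < sep := by
      intro n
      have hmem : ((1:ℝ)/(n+1)) • v ∈ K := hKcone v hvK _ (by positivity)
      have := hφ1 _ ⟨_, hmem, rfl⟩
      rwa [map_add, map_smul, smul_eq_mul] at this
    have htend : Tendsto (fun n : ℕ => φ x₀ + (1/(n+1)) * φ v) atTop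
        (𝓝 (φ x₀ + 0 * φ v)) :=
      tendsto_const_nhds.add (tendsto_one_div_add_atTop_nhds_zero_nat.mul tendsto_const_nhds)
    have := le_of_tendsto htend (Eventually.of_forall fun n => (hseq n).le)
    simpa using this
  set g : X →L[ℝ] ℝ := -φ with hgdef
  have hgK : ∀ h ∈ K, 0 < g h := by
    intro h hh
    have := hφK h hh
    simp only [hgdef, ContinuousLinearMap.neg_apply]
    linarith
  set γ := g v with hγdef
  have hγpos : 0 < γ := hgK v hvK
  have hγne : γ ≠ 0 := ne_of_gt hγpos
  have hgC : ∀ y ∈ C, g y ≤ g x₀ := by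
    intro y hy
    have h1 : sep ≤ φ y := hφ2 _ hy
    simp only [hgdef, ContinuousLinearMap.neg_apply]
    linarith
  -- closure of the cone
  have hgK0 : ∀ h : X, ε * ‖h‖ ≤ x' h → 0 ≤ g h := by
    intro h hh
    have hseq : ∀ n : ℕ, 0 ≤ g h + (1/(n+1)) * γ := by
      intro n
      have ht : (0:ℝ) < 1/(n+1) := by positivity
      have hmem : h + ((1:ℝ)/(n+1)) • v ∈ K := by
        show ε * ‖h + ((1:ℝ)/(n+1)) • v‖ < x' (h + ((1:ℝ)/(n+1)) • v)
        have h1 : ‖h + ((1:ℝ)/(n+1)) • v‖ ≤ ‖h‖ + (1/(n+1)) * ‖v‖ := by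
          calc ‖h + ((1:ℝ)/(n+1)) • v‖ ≤ ‖h‖ + ‖((1:ℝ)/(n+1)) • v‖ := norm_add_le _ _
            _ = ‖h‖ + (1/(n+1)) * ‖v‖ := by rw [norm_smul, Real.norm_of_nonneg ht.le]
        have h2 : x' (h + ((1:ℝ)/(n+1)) • v) = x' h + (1/(n+1)) * α := by
          rw [map_add, map_smul, smul_eq_mul]
        rw [h2]
        have h3 : (1/(n+1) : ℝ) * ‖v‖ ≤ 1/(n+1) := mul_le_of_le_one_right ht.le hvn
        nlinarith
      have := hgK _ hmem
      rw [map_add, map_smul, smul_eq_mul] at this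
      linarith
    have htend : Tendsto (fun n : ℕ => g h + (1/(n+1)) * γ) atTop (𝓝 (g h + 0 * γ)) :=
      tendsto_const_nhds.add (tendsto_one_div_add_atTop_nhds_zero_nat.mul tendsto_const_nhds)
    have := ge_of_tendsto htend (Eventually.of_forall hseq)
    simpa using this
  set t₀ := ε / (α - ε) with ht₀def
  have ht₀pos : 0 < t₀ := div_pos hεpos (by linarith)
  have ht₀eq : t₀ * (α - ε) = ε := div_mul_cancel₀ _ (by linarith : α - ε ≠ 0)
  clear_value t₀
  -- kernel estimate
  have hker : ∀ h : X, x' h = 0 → -(t₀ * γ * ‖h‖) ≤ g h := by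
    intro h hh
    have hw : ε * ‖h + (t₀ * ‖h‖) • v‖ ≤ x' (h + (t₀ * ‖h‖) • v) := by
      have hn1 : ‖h + (t₀ * ‖h‖) • v‖ ≤ ‖h‖ + t₀ * ‖h‖ * ‖v‖ := by
        calc ‖h + (t₀ * ‖h‖) • v‖ ≤ ‖h‖ + ‖(t₀ * ‖h‖) • v‖ := norm_add_le _ _
          _ = ‖h‖ + t₀ * ‖h‖ * ‖v‖ := by
              rw [norm_smul, Real.norm_of_nonneg (by positivity)]
      have hx'w : x' (h + (t₀ * ‖h‖) • v) = t₀ * ‖h‖ * α := by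
        rw [map_add, map_smul, smul_eq_mul, hh, zero_add]
      rw [hx'w]
      have h3 : t₀ * ‖h‖ * ‖v‖ ≤ t₀ * ‖h‖ := mul_le_of_le_one_right (by positivity) hvn
      have e1 := mul_le_mul_of_nonneg_left hn1 hεpos.le
      have e2 := mul_le_mul_of_nonneg_left h3 hεpos.le
      have e4 : (ε + ε * t₀) * ‖h‖ = t₀ * α * ‖h‖ := by
        have h4 : ε + ε * t₀ = t₀ * α := by nlinarith [ht₀eq]
        rw [h4]
      nlinarith [e1, e2, e4]
    have := hgK0 _ hw
    rw [map_add, map_smul, smul_eq_mul] at this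
    linarith
  have hker2 : ∀ h : X, x' h = 0 → |g h| ≤ t₀ * γ * ‖h‖ := by
    intro h hh
    rw [abs_le]
    constructor
    · exact hker h hh
    · have := hker (-h) (by rw [map_neg, hh, neg_zero])
      rw [map_neg, norm_neg] at this
      linarith
  -- global estimate
  have hglobal : ∀ x : X, |g x - (γ/α) * x' x| ≤ t₀ * γ * (1 + ‖x'‖/α) * ‖x‖ := by
    intro x
    have hαne : α ≠ 0 := by linarith
    set k := x - (x' x / α) • v with hkdef
    have hk : x' k = 0 := by
      simp only [hkdef, map_sub, map_smul, smul_eq_mul, ← hαdef]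
      field_simp
      simp
    have hgk : g k = g x - (x' x / α) * γ := by
      simp only [hkdef, map_sub, map_smul, smul_eq_mul]
      rfl
    have hkn : ‖k‖ ≤ (1 + ‖x'‖/α) * ‖x‖ := by
      have h1 : ‖k‖ ≤ ‖x‖ + |x' x / α| * ‖v‖ := by
        calc ‖k‖ ≤ ‖x‖ + ‖(x' x / α) • v‖ := norm_sub_le _ _
          _ = ‖x‖ + |x' x / α| * ‖v‖ := by rw [norm_smul, Real.norm_eq_abs]
      have h2 : |x' x / α| * ‖v‖ ≤ |x' x| / α := by
        rw [abs_div, abs_of_pos (show (0:ℝ) < α by linarith)]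
        exact mul_le_of_le_one_right (div_nonneg (abs_nonneg _) hαpos.le) hvn
      have h3 : |x' x| ≤ ‖x'‖ * ‖x‖ := x'.le_opNorm x
      have h4 : |x' x| / α ≤ ‖x'‖ * ‖x‖ / α := div_le_div_of_nonneg_right h3 hαpos.le
      have h5 : (1 + ‖x'‖/α) * ‖x‖ = ‖x‖ + ‖x'‖ * ‖x‖ / α := by ring
      rw [h5]
      linarith
    have heq : g x - (γ/α) * x' x = g k := by
      rw [hgk]; ring
    rw [heq]
    calc |g k| ≤ t₀ * γ * ‖k‖ := hker2 k hk
      _ ≤ t₀ * γ * ((1 + ‖x'‖/α) * ‖x‖) :=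
          mul_le_mul_of_nonneg_left hkn (mul_nonneg ht₀pos.le hγpos.le)
      _ = t₀ * γ * (1 + ‖x'‖/α) * ‖x‖ := by ring
  -- the support functional
  set y' : X →L[ℝ] ℝ := (α/γ) • g with hy'def
  have hy'S : y' ∈ {x' : X →L[ℝ] ℝ | ∃ x : X, (x, x') ∈ normalConeGraph C} := by
    refine ⟨x₀, hx₀C, ?_⟩
    intro y hy
    have h1 : g y ≤ g x₀ := hgC y hy
    have h2 : y' (y - x₀) = (α/γ) * (g y - g x₀) := by
      simp only [hy'def, ContinuousLinearMap.smul_apply, map_sub, smul_eq_mul]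
      ring
    rw [h2]
    apply mul_nonpos_of_nonneg_of_nonpos (div_nonneg hαpos.le hγpos.le)
    linarith
  -- distance estimate
  have hb8 : t₀ * (α + ‖x'‖) ≤ 8 * ε := by
    rw [ht₀def, div_mul_eq_mul_div, div_le_iff₀ (by linarith : (0:ℝ) < α - ε)]
    nlinarith [hεpos, hεα, hvgt, hαle, hε4]
  have hdist : ‖y' - x'‖ ≤ 8 * ε := by
    apply ContinuousLinearMap.opNorm_le_bound _ (by positivity)
    intro x
    have h1 : (y' - x') x = (α/γ) * (g x - (γ/α) * x' x) := by
      simp only [hy'def, ContinuousLinearMap.sub_apply, ContinuousLinearMap.smul_apply,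
        smul_eq_mul]
      field_simp [hαne, hγne]
    rw [h1, Real.norm_eq_abs, abs_mul, abs_of_pos (div_pos hαpos hγpos)]
    calc (α/γ) * |g x - (γ/α) * x' x| ≤ (α/γ) * (t₀ * γ * (1 + ‖x'‖/α) * ‖x‖) :=
        mul_le_mul_of_nonneg_left (hglobal x) (div_nonneg hαpos.le hγpos.le)
      _ = t₀ * (α + ‖x'‖) * ‖x‖ := by
          field_simp [hαne, hγne]
      _ ≤ 8 * ε * ‖x‖ := mul_le_mul_of_nonneg_right hb8 (norm_nonneg _)
      _ = 8 * ε * ‖x‖ := rfl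
  refine ⟨y', ?_, hy'S⟩
  rw [Metric.mem_ball, dist_eq_norm]
  calc ‖y' - x'‖ ≤ 8 * ε := hdist
    _ ≤ 8 * (rr/9) := by linarith
    _ < rr := by linarith
end

section
/- Let X be a real Banach space and let C ⊆ X be a nonempty closed convex set. Then the support functionals of C are norm-dense in the effective domain of σ_C: for every ε > 0 and every f ∈ X* with sup_C f < +∞, there exist g ∈ X* and x₀ ∈ C such that g(x₀) = sup_C g (that is, g ∈ N_C(x₀)) and ‖f − g‖ ≤ ε. -/
open Set Classical

variable {X : Type*} [NormedAddCommGroup X] [NormedSpace ℝ X] [CompleteSpace X]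

open Filter Topology in
private theorem ekeland_linear_aux (C : Set X) (hne : C.Nonempty) (hcl : IsClosed C)
    (f : X →L[ℝ] ℝ) (hbdd : BddAbove (f '' C)) {ε : ℝ} (hε : 0 < ε) :
    ∃ x₀ ∈ C, ∀ y ∈ C, f y ≤ f x₀ + ε * ‖y - x₀‖ := by
  classical
  set S : X → Set X := fun x => {y ∈ C | f x + ε * ‖y - x‖ ≤ f y} with hS
  have hself : ∀ x ∈ C, x ∈ S x := by
    intro x hx; refine ⟨hx, ?_⟩; simp
  have hsub : ∀ x, S x ⊆ C := fun x y hy => hy.1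
  have htrans : ∀ x y, y ∈ S x → S y ⊆ S x := by
    intro x y hy z hz
    refine ⟨hz.1, ?_⟩
    have h1 := hy.2
    have h2 := hz.2
    have : ε * ‖z - x‖ ≤ ε * (‖z - y‖ + ‖y - x‖) := by
      have := norm_sub_le_norm_sub_add_norm_sub z y x
      nlinarith
    nlinarith
  have hSne : ∀ x ∈ C, (S x).Nonempty := fun x hx => ⟨x, hself x hx⟩
  have hSbdd : ∀ x, BddAbove (f '' S x) := fun x =>
    hbdd.mono (image_mono (hsub x))
  -- closedness of S x
  have hScl : ∀ x, IsClosed (S x) := by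
    intro x
    have : S x = C ∩ {y | f x + ε * ‖y - x‖ ≤ f y} := by
      ext y; exact ⟨fun h => ⟨h.1, h.2⟩, fun h => ⟨h.1, h.2⟩⟩
    rw [this]
    exact hcl.inter (isClosed_le (by continuity) f.continuous)
  -- choice step
  have step : ∀ (n : ℕ) (x : {x : X // x ∈ C}),
      ∃ y : {x : X // x ∈ C}, y.1 ∈ S x.1 ∧ sSup (f '' S x.1) - (1/2)^(n+1) < f y.1 := by
    intro n x
    have hne' : (f '' S x.1).Nonempty := (hSne x.1 x.2).image f
    have hlt : sSup (f '' S x.1) - (1/2)^(n+1) < sSup (f '' S x.1) := by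
      have : (0:ℝ) < (1/2)^(n+1) := by positivity
      linarith
    obtain ⟨b, hb, hb2⟩ := exists_lt_of_lt_csSup hne' hlt
    obtain ⟨y, hy, rfl⟩ := hb
    exact ⟨⟨y, hsub _ hy⟩, hy, hb2⟩
  choose v hv1 hv2 using step
  obtain ⟨x1, hx1⟩ := hne
  set u : ℕ → {x : X // x ∈ C} := fun n => Nat.rec ⟨x1, hx1⟩ v n with hu
  have hustep : ∀ n, u (n+1) = v n (u n) := fun n => rfl
  -- chain
  have hchain : ∀ n m, n ≤ m → (u m).1 ∈ S (u n).1 := by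
    intro n m hnm
    induction m, hnm using Nat.le_induction with
    | base => exact hself _ (u n).2
    | succ m hnm ih =>
      exact htrans _ _ ih (by rw [hustep]; exact hv1 m (u m))
  have hmono : ∀ n m, n ≤ m → f (u n).1 ≤ f (u m).1 := by
    intro n m hnm
    have h := (hchain n m hnm).2
    nlinarith [norm_nonneg ((u m).1 - (u n).1)]
  have hrangebdd : BddAbove (range fun n => f (u n).1) := by
    obtain ⟨M, hM⟩ := hbdd
    refine ⟨M, ?_⟩
    rintro _ ⟨n, rfl⟩
    exact hM ⟨(u n).1, (u n).2, rfl⟩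
  set L : ℝ := ⨆ n, f (u n).1 with hL
  have htendL : Tendsto (fun n => f (u n).1) atTop (𝓝 L) :=
    tendsto_atTop_ciSup (fun a b hab => hmono a b hab) hrangebdd
  have hleL : ∀ n, f (u n).1 ≤ L := fun n => le_ciSup hrangebdd n
  -- cauchy
  have hdist : ∀ n m N, N ≤ n → N ≤ m →
      dist (u n).1 (u m).1 ≤ 2 * (L - f (u N).1) / ε := by
    intro n m N hn hm
    have h1 := (hchain N n hn).2
    have h2 := (hchain N m hm).2
    have h3 : ‖(u n).1 - (u N).1‖ ≤ (L - f (u N).1) / ε := by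
      rw [le_div_iff₀ hε]; nlinarith [hleL n]
    have h4 : ‖(u m).1 - (u N).1‖ ≤ (L - f (u N).1) / ε := by
      rw [le_div_iff₀ hε]; nlinarith [hleL m]
    have := norm_sub_le_norm_sub_add_norm_sub (u n).1 (u N).1 (u m).1
    rw [dist_eq_norm]
    have h5 : ‖(u N).1 - (u m).1‖ = ‖(u m).1 - (u N).1‖ := norm_sub_rev _ _
    rw [h5] at this
    calc ‖(u n).1 - (u m).1‖ ≤ _ := this
      _ ≤ 2 * (L - f (u N).1) / ε := by rw [mul_div_assoc]; linarith
  have hcauchy : CauchySeq (fun n => (u n).1) := by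
    apply cauchySeq_of_le_tendsto_0 (fun N => 2 * (L - f (u N).1) / ε) hdist
    have : Tendsto (fun N => 2 * (L - f (u N).1) / ε) atTop (𝓝 (2 * (L - L) / ε)) := by
      exact (((tendsto_const_nhds.sub htendL).const_mul 2).div_const ε)
    simpa using this
  obtain ⟨xb, hxb⟩ := cauchySeq_tendsto_of_complete hcauchy
  have hxbC : xb ∈ C := hcl.mem_of_tendsto hxb (Eventually.of_forall fun n => (u n).2)
  have hxbS : ∀ n, xb ∈ S (u n).1 := by
    intro n
    refine (hScl (u n).1).mem_of_tendsto hxb ?_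
    filter_upwards [eventually_ge_atTop n] with m hm
    exact hchain n m hm
  have hLxb : L ≤ f xb := by
    apply ciSup_le
    intro n
    have := (hxbS n).2
    nlinarith [norm_nonneg (xb - (u n).1)]
  refine ⟨xb, hxbC, ?_⟩
  intro y hy
  by_contra hcon
  push_neg at hcon
  have hyS : y ∈ S xb := ⟨hy, le_of_lt hcon⟩
  have hfyL : f y ≤ L := by
    apply le_of_forall_pos_le_add
    intro η hη
    obtain ⟨n, hn⟩ := exists_pow_lt_of_lt_one hη (by norm_num : (1:ℝ)/2 < 1)
    have hySn : y ∈ S (u n).1 := htrans _ _ (hxbS n) hyS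
    have h1 : f y ≤ sSup (f '' S (u n).1) := le_csSup (hSbdd _) ⟨y, hySn, rfl⟩
    have h2 := hv2 n (u n)
    rw [← hustep] at h2
    have h3 : ((1:ℝ)/2)^(n+1) ≤ (1/2)^n := by
      apply pow_le_pow_of_le_one (by norm_num) (by norm_num)
      omega
    have := hleL (n+1)
    linarith
  have : f xb < f y := by nlinarith [norm_nonneg (y - xb)]
  linarith


/-- Bishop–Phelps: in a Banach space, the support functionals of a nonempty closed convex
set `C` are norm-dense in the domain of `σ_C`: for every `ε > 0` and `f ∈ X*` bounded
above on `C`, there are `g ∈ X*` and `x₀ ∈ C` with `g ∈ N_C(x₀)` and `‖f - g‖ ≤ ε`. -/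
theorem support_functionals_dense_in_dom (C : Set X)
    (hne : C.Nonempty) (hcl : IsClosed C) (hconv : Convex ℝ C) :
    ∀ ε > (0 : ℝ), ∀ f : X →L[ℝ] ℝ, BddAbove (f '' C) →
      ∃ (g : X →L[ℝ] ℝ) (x₀ : X), (x₀, g) ∈ normalConeGraph C ∧ ‖f - g‖ ≤ ε := by
  intro ε hε f hbdd
  obtain ⟨x₀, hx₀, hek⟩ := ekeland_linear_aux C hne hcl f hbdd hε
  set A : Set (X × ℝ) := {p | ε * ‖p.1‖ < p.2} with hA
  set B : Set (X × ℝ) := (fun y => (y - x₀, f (y - x₀))) '' C with hBdef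
  have hAopen : IsOpen A := isOpen_lt (by continuity) continuous_snd
  have hAconv : Convex ℝ A := by
    intro p hp q hq a b ha hb hab
    simp only [hA, mem_setOf_eq] at hp hq ⊢
    have hfst : (a • p + b • q).1 = a • p.1 + b • q.1 := rfl
    have hsnd : (a • p + b • q).2 = a * p.2 + b * q.2 := rfl
    rw [hfst, hsnd]
    have h1 : ε * ‖a • p.1 + b • q.1‖ ≤ a * (ε * ‖p.1‖) + b * (ε * ‖q.1‖) := by
      have h := norm_add_le (a • p.1) (b • q.1)
      rw [norm_smul, norm_smul, Real.norm_eq_abs, Real.norm_eq_abs,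
        abs_of_nonneg ha, abs_of_nonneg hb] at h
      nlinarith
    rcases lt_or_eq_of_le ha with ha' | ha'
    · have h2 := mul_lt_mul_of_pos_left hp ha'
      have h3 := mul_le_mul_of_nonneg_left (le_of_lt hq) hb
      linarith
    · have hb' : (0:ℝ) < b := by rw [← ha'] at hab; linarith
      have h2 := mul_lt_mul_of_pos_left hq hb'
      have h3 := mul_le_mul_of_nonneg_left (le_of_lt hp) ha
      linarith
  have hBconv : Convex ℝ B := by
    rintro _ ⟨y1, hy1, rfl⟩ _ ⟨y2, hy2, rfl⟩ a b ha hb hab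
    refine ⟨a • y1 + b • y2, hconv hy1 hy2 ha hb hab, ?_⟩
    have hfst : a • y1 + b • y2 - x₀ = a • (y1 - x₀) + b • (y2 - x₀) := by
      have hxx : a • x₀ + b • x₀ = x₀ := by rw [← add_smul, hab, one_smul]
      calc a • y1 + b • y2 - x₀ = a • y1 + b • y2 - (a • x₀ + b • x₀) := by rw [hxx]
        _ = a • (y1 - x₀) + b • (y2 - x₀) := by rw [smul_sub, smul_sub]; abel
    have hsnd : f (a • y1 + b • y2 - x₀) = a * f (y1 - x₀) + b * f (y2 - x₀) := by
      rw [hfst, map_add, map_smul, map_smul]; rfl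
    refine Prod.ext ?_ ?_
    · exact hfst
    · exact hsnd
  have hdisj : Disjoint A B := by
    rw [disjoint_left]
    rintro p hp ⟨y, hy, rfl⟩
    have h1 := hek y hy
    simp only [hA, mem_setOf_eq] at hp
    rw [map_sub] at hp
    linarith
  obtain ⟨φ, u, hAsep, hBsep⟩ := geometric_hahn_banach_open hAconv hAopen hBconv hdisj
  set h : X →L[ℝ] ℝ := φ.comp (ContinuousLinearMap.inl ℝ X ℝ) with hhdef
  set c : ℝ := φ (0, 1) with hcdef
  have hdecomp : ∀ (y : X) (t : ℝ), φ (y, t) = h y + t * c := by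
    intro y t
    have heq : (y, t) = (y, (0:ℝ)) + t • ((0:X), (1:ℝ)) := by
      simp [Prod.ext_iff]
    rw [heq, map_add, map_smul]
    rfl
  have hA' : ∀ (y : X) (t : ℝ), ε * ‖y‖ < t → h y + t * c < u := by
    intro y t ht
    have := hAsep (y, t) ht
    rwa [hdecomp] at this
  have hu0 : u ≤ 0 := by
    have := hBsep _ ⟨x₀, hx₀, rfl⟩
    simp only [sub_self, map_zero] at this
    simpa [show ((0:X), (0:ℝ)) = 0 from rfl] using this
  have hc : c < 0 := by
    have := hA' 0 1 (by simp [hε])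
    simp only [map_zero, norm_zero, one_mul] at this
    linarith
  have hu0' : 0 ≤ u := by
    by_contra hcon
    push_neg at hcon
    have hs : (0:ℝ) < u / (2 * c) := div_pos_of_neg_of_neg hcon (by linarith)
    have := hA' 0 (u / (2 * c)) (by simpa using hs)
    simp only [map_zero, zero_add] at this
    rw [div_mul_eq_mul_div, mul_comm 2 c, ← div_div, mul_div_assoc] at this
    rw [div_self (ne_of_lt hc)] at this
    nlinarith
  have hu : u = 0 := le_antisymm hu0 hu0'
  have key : ∀ y : X, h y + ε * ‖y‖ * c ≤ 0 := by
    intro y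
    apply le_of_forall_pos_le_add
    intro η hη
    have hδ : (0:ℝ) < η / (-c) := div_pos hη (by linarith)
    have := hA' y (ε * ‖y‖ + η / (-c)) (by linarith)
    rw [hu] at this
    have hne0 : (-c) ≠ 0 := ne_of_gt (by linarith)
    have hmc : η / (-c) * c = -η := by
      calc η / (-c) * c = -(η / (-c) * (-c)) := by ring
        _ = -η := by rw [div_mul_cancel₀ η hne0]
    nlinarith [this]
  have hB' : ∀ y ∈ C, 0 ≤ h (y - x₀) + f (y - x₀) * c := by
    intro y hy
    have := hBsep _ ⟨y, hy, rfl⟩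
    rw [hdecomp, hu] at this
    linarith
  set h' : X →L[ℝ] ℝ := (-c)⁻¹ • h with hh'def
  have hmcpos : (0:ℝ) < -c := by linarith
  have happ : ∀ y : X, h' y = (-c)⁻¹ * h y := by
    intro y; simp [hh'def]
  have hh'bound : ∀ y : X, h' y ≤ ε * ‖y‖ := by
    intro y
    rw [happ y, inv_mul_le_iff₀ hmcpos]
    have hre : -c * (ε * ‖y‖) = -(ε * ‖y‖ * c) := by ring
    rw [hre]
    linarith [key y]
  refine ⟨f - h', x₀, ⟨hx₀, ?_⟩, ?_⟩
  · intro y hy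
    have h1 := hB' y hy
    have h2 : f (y - x₀) * (-c) ≤ h (y - x₀) := by linarith
    have h3 : f (y - x₀) ≤ h' (y - x₀) := by
      rw [happ, le_inv_mul_iff₀ hmcpos]
      have hre : -c * f (y - x₀) = f (y - x₀) * (-c) := by ring
      rw [hre]
      exact h2
    simp only [ContinuousLinearMap.sub_apply]
    linarith
  · have : f - (f - h') = h' := sub_sub_cancel f h'
    rw [this]
    apply ContinuousLinearMap.opNorm_le_bound _ (le_of_lt hε)
    intro y
    rw [Real.norm_eq_abs, abs_le]
    constructor
    · have := hh'bound (-y)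
      rw [map_neg, norm_neg] at this
      linarith
    · exact hh'bound y
end

section
/- Let X be a real Hausdorff locally convex space and C, S ⊆ X. Then Graph(N_C|_S) ⊆ Graph N_{C_S^#}, and moreover N_C|_S = N_{C_S^#}|_S if and only if S ∩ C = S ∩ C_S^#. In particular, N_{C#}|_C = N_C. -/
open Set Classical

variable {X : Type*} [AddCommGroup X] [Module ℝ X] [TopologicalSpace X]
  [IsTopologicalAddGroup X] [ContinuousSMul ℝ X] [LocallyConvexSpace ℝ X] [T2Space X]

/-- The partial portable hull `C_S^#` of `C` on `S`: all `x` with `⟨x - a, a*⟩ ≤ 0`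
for every `a ∈ C ∩ S` and `a* ∈ N_C(a)`. -/
def partialPortableHull (C S : Set X) : Set X :=
  {x | ∀ a ∈ C ∩ S, ∀ a' : X →L[ℝ] ℝ, (a, a') ∈ normalConeGraph C → a' (x - a) ≤ 0}

/-- `Graph (N_C|_S) ⊆ Graph N_{C_S^#}`; moreover `N_C|_S = N_{C_S^#}|_S` iff
`S ∩ C = S ∩ C_S^#`. In particular `N_{C#}|_C = N_C`. -/
theorem partialPortableHull_normalCone_props (C S : Set X) :
    normalConeGraph C ∩ (S ×ˢ (univ : Set (X →L[ℝ] ℝ))) ⊆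
      normalConeGraph (partialPortableHull C S) ∧
    (normalConeGraph C ∩ (S ×ˢ (univ : Set (X →L[ℝ] ℝ))) =
        normalConeGraph (partialPortableHull C S) ∩ (S ×ˢ (univ : Set (X →L[ℝ] ℝ))) ↔
      S ∩ C = S ∩ partialPortableHull C S) ∧
    normalConeGraph (portableHull C) ∩ (C ×ˢ (univ : Set (X →L[ℝ] ℝ))) =
      normalConeGraph C := by
  have hCsub : C ⊆ partialPortableHull C S := by
    intro c hc a ha a' ha'
    exact ha'.2 c hc
  have hsub : normalConeGraph C ∩ (S ×ˢ (univ : Set (X →L[ℝ] ℝ))) ⊆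
      normalConeGraph (partialPortableHull C S) := by
    rintro ⟨x, x'⟩ ⟨⟨hxC, hx'⟩, hxS, -⟩
    refine ⟨hCsub hxC, ?_⟩
    intro y hy
    exact hy x ⟨hxC, hxS⟩ x' ⟨hxC, hx'⟩
  refine ⟨hsub, ?_, ?_⟩
  · constructor
    · intro h
      ext x
      constructor
      · rintro ⟨hxS, hxC⟩
        exact ⟨hxS, hCsub hxC⟩
      · rintro ⟨hxS, hxH⟩
        have : ((x, (0 : X →L[ℝ] ℝ)) : X × (X →L[ℝ] ℝ)) ∈
            normalConeGraph (partialPortableHull C S) ∩ (S ×ˢ (univ : Set (X →L[ℝ] ℝ))) := by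
          refine ⟨⟨hxH, fun y _ => by simp⟩, hxS, trivial⟩
        rw [← h] at this
        exact ⟨hxS, this.1.1⟩
    · intro h
      refine Set.Subset.antisymm (fun p hp => ⟨hsub hp, hp.2⟩) ?_
      rintro ⟨x, x'⟩ ⟨⟨hxH, hx'⟩, hxS, -⟩
      have hxC : x ∈ C := by
        have : x ∈ S ∩ C := h ▸ ⟨hxS, hxH⟩
        exact this.2
      exact ⟨⟨hxC, fun y hy => hx' y (hCsub hy)⟩, hxS, trivial⟩
  · have hCsub' : C ⊆ portableHull C := fun c hc p hp => hp.2 c hc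
    ext ⟨x, x'⟩
    constructor
    · rintro ⟨⟨hxH, hx'⟩, hxC, -⟩
      exact ⟨hxC, fun y hy => hx' y (hCsub' hy)⟩
    · rintro ⟨hxC, hx'⟩
      refine ⟨⟨hCsub' hxC, fun y hy => hy (x, x') ⟨hxC, hx'⟩⟩, hxC, trivial⟩
end

section
/- Let X be a real Hausdorff locally convex space and C, S ⊆ X with C nonempty. Then the partial portable hull satisfies (C_S^#)_S^# = (C_S^#)# = C_S^#. In particular, the normal cone N_{C_S^#} is a maximal monotone operator. -/
open Set Classical

variable {X : Type*} [AddCommGroup X] [Module ℝ X] [TopologicalSpace X]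
  [IsTopologicalAddGroup X] [ContinuousSMul ℝ X] [LocallyConvexSpace ℝ X] [T2Space X]

/-- `(C_S^#)_S^# = (C_S^#)^# = C_S^#`; in particular `N_{C_S^#}` is maximal monotone. -/
theorem partialPortableHull_idempotent (C S : Set X) (hC : C.Nonempty) :
    partialPortableHull (partialPortableHull C S) S = portableHull (partialPortableHull C S) ∧
    portableHull (partialPortableHull C S) = partialPortableHull C S ∧
    IsMaximalMonotone (normalConeGraph (partialPortableHull C S)) := by
  set D := partialPortableHull C S with hDdef
  -- C ⊆ D
  have hCD : C ⊆ D := by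
    intro x hx a ha a' ha'
    exact ha'.2 x hx
  -- key: normal cone functionals of C at points of C ∩ S are normal to D
  have key : ∀ a ∈ C ∩ S, ∀ a' : X →L[ℝ] ℝ, (a, a') ∈ normalConeGraph C →
      (a, a') ∈ normalConeGraph D := by
    intro a ha a' ha'
    refine ⟨hCD ha'.1, ?_⟩
    intro y hy
    exact hy a ha a' ha'
  -- portableHull D = D
  have hph : portableHull D = D := by
    apply Set.Subset.antisymm
    · intro x hx a ha a' ha'
      exact hx (a, a') (key a ha a' ha')
    · intro x hx p hp
      exact hp.2 x hx
  -- partialPortableHull D S = D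
  have hpps : partialPortableHull D S = D := by
    apply Set.Subset.antisymm
    · intro x hx a ha a' ha'
      exact hx a ⟨hCD ha.1, ha.2⟩ a' (key a ha a' ha')
    · intro x hx a ha a' ha'
      exact ha'.2 x hx
  refine ⟨hpps.trans hph.symm, hph, ?_, ?_, ?_⟩
  · obtain ⟨x0, hx0⟩ := hC
    exact ⟨(x0, 0), hCD hx0, fun y _ => le_of_eq rfl⟩
  · intro p hp q hq
    have h1 : p.2 (q.1 - p.1) ≤ 0 := hp.2 q.1 hq.1
    have h2 : q.2 (p.1 - q.1) ≤ 0 := hq.2 p.1 hp.1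
    have h3 : p.2 (q.1 - p.1) = - p.2 (p.1 - q.1) := by
      rw [(neg_sub _ _).symm, map_neg]
    rw [ContinuousLinearMap.sub_apply]
    linarith
  · intro G' hmono hsub
    refine Set.Subset.antisymm ?_ hsub
    rintro ⟨z, z'⟩ hz
    have hzD : z ∈ D := by
      rw [← hph]
      intro p hp
      by_contra hc
      push_neg at hc
      set c : ℝ := p.2 (z - p.1) with hcdef
      set v : ℝ := z' (z - p.1) with hvdef
      set t : ℝ := (|v| + 1) / c with htdef
      have ht : 0 ≤ t := div_nonneg (by positivity) hc.le
      have hmem : (p.1, t • p.2) ∈ normalConeGraph D := by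
        refine ⟨hp.1, fun y hy => ?_⟩
        rw [ContinuousLinearMap.smul_apply, smul_eq_mul]
        exact mul_nonpos_of_nonneg_of_nonpos ht (hp.2 y hy)
      have := hmono (z, z') hz (p.1, t • p.2) (hsub hmem)
      rw [ContinuousLinearMap.sub_apply, ContinuousLinearMap.smul_apply, smul_eq_mul] at this
      have htc : t * c = |v| + 1 := div_mul_cancel₀ _ (ne_of_gt hc)
      have hv : v ≤ |v| := le_abs_self v
      simp only [← hvdef, ← hcdef] at this
      linarith
    have hzn : ∀ y ∈ D, z' (y - z) ≤ 0 := by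
      intro y hy
      have hy0 : (y, (0 : X →L[ℝ] ℝ)) ∈ normalConeGraph D :=
        ⟨hy, fun w _ => le_of_eq rfl⟩
      have := hmono (z, z') hz (y, 0) (hsub hy0)
      rw [ContinuousLinearMap.sub_apply] at this
      have h3 : z' (y - z) = - z' (z - y) := by
        rw [(neg_sub _ _).symm, map_neg]
      simp only [ContinuousLinearMap.zero_apply, sub_zero] at this
      linarith
    exact ⟨hzD, hzn⟩
end
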